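/- arXiv:1207.0896 — 6 statements merged into one kernel-verified Lean document; each statement's English description precedes it below -/
import Mathlib

section
/- For the n-dimensional hypercube C_n with indeterminate weights x_{i,ε} assigned to oriented edges of direction i and spin ε, the weighted rooted-forest enumerator satisfies F_{C_n}(t; x) = ∏_{S ⊆ [n]} ( t + ∑_{i ∈ S} (x_{i,0} + x_{i,1}) ). -/
open scoped Classical
open Polynomial

noncomputable section

/-- A rooted (spanning) forest of the digraph with arc relation `A`:
every vertex has at most one outgoing arc (encoded by `f : V → Option V`),
all arcs of the forest are arcs of the digraph, and there is no directed cycle. -/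
def IsRootedForest {V : Type*} (A : V → V → Prop) (f : V → Option V) : Prop :=
  (∀ v w : V, f v = some w → A v w) ∧
  ∀ v : V, ¬ Relation.TransGen (fun a b : V => f a = some b) v v

/-- The number of components (= roots) of a rooted forest. -/
def numRoots {V : Type*} [Fintype V] (f : V → Option V) : ℕ :=
  (Finset.univ.filter fun v => f v = none).card

/-- The rooted-forest enumerator of a weighted digraph:
`∑_F t^(#components of F) ∏_{arcs (v,w) ∈ F} wgt v w`. -/
def forestEnum {V : Type*} [Fintype V] {R : Type*} [CommRing R]
    (A : V → V → Prop) (wgt : V → V → R) (t : R) : R :=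
  ∑ f ∈ Finset.univ.filter (fun f : V → Option V => IsRootedForest A f),
    ∏ v : V, (f v).elim t (wgt v)

/-- Arc relation of the `n`-dimensional hypercube on `{0,1}^n`:
an arc from `u` to `v` flips exactly one coordinate. -/
def cubeArc (n : ℕ) (u v : Fin n → Bool) : Prop :=
  ∃ i : Fin n, v = Function.update u i (!(u i))

/-- Weight of a hypercube arc: an arc of direction `i` and spin `ε`
(i.e. flipping coordinate `i` to the value `ε`) has weight `x i ε`. -/
def cubeWeight {R : Type*} [CommRing R] (n : ℕ) (x : Fin n → Bool → R)
    (u v : Fin n → Bool) : R :=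
  ∑ i : Fin n, if v = Function.update u i (!(u i)) then x i (v i) else 0

end

/-!
Expanding `det (L + t • 1)`, with `L` the out-degree Laplacian of the weights, over permutations
`σ` and, inside each entry, over the choice at every vertex of an out-arc or of being a root,
indexes the terms by maps `f : V → Option V`. The permutations contributing to `f` are the
products of disjoint cycles of `f`, weighted by `(-1)` to their number of cycles; toggling one
fixed cycle shows that these cancel unless `f` is acyclic, so the determinant is the forest
enumerator. Splitting the cube along its first coordinate, `L + t • 1` becomes the block matrix
`[[N + a, -a], [-b, N + b]]` with `N = L' + t • 1` for the cube of one dimension less; its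
determinant is `det N * det (N + (a + b) • 1)`, and induction gives the product over subsets.
-/

open Finset Equiv Equiv.Perm Relation Matrix

section FollowsArcs

variable {V : Type*} {f : V → Option V} {σ τ c : Perm V}

/-- The permutations following `f` are the products of disjoint cycles of the functional
digraph of `f`. -/
def FollowsArcs (f : V → Option V) (σ : Perm V) : Prop :=
  ∀ v, σ v ≠ v → f v = some (σ v)

theorem FollowsArcs.apply_eq (hσ : FollowsArcs f σ) (hτ : FollowsArcs f τ) {v : V}
    (hσv : σ v ≠ v) (hτv : τ v ≠ v) : σ v = τ v :=
  Option.some_injective _ ((hσ v hσv).symm.trans (hτ v hτv))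

theorem FollowsArcs.mul_of_disjoint (hσ : FollowsArcs f σ) (hτ : FollowsArcs f τ)
    (hd : σ.Disjoint τ) : FollowsArcs f (σ * τ) := by
  intro v hv
  rcases hd v with hσv | hτv
  · rw [hd.commute.eq, mul_apply, hσv] at hv ⊢
    exact hτ v hv
  · rw [mul_apply, hτv] at hv ⊢
    exact hσ v hv

theorem FollowsArcs.mul_inv_of_disjoint (hσ : FollowsArcs f σ) (hd : (σ * c⁻¹).Disjoint c) :
    FollowsArcs f (σ * c⁻¹) := by
  intro v hv
  have hcv : c⁻¹ v = v := inv_eq_iff_eq.mpr ((hd v).resolve_left hv).symm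
  rw [mul_apply, hcv] at hv ⊢
  exact hσ v hv

theorem FollowsArcs.cycleOf [Fintype V] [DecidableEq V] (hσ : FollowsArcs f σ) (v : V) :
    FollowsArcs f (σ.cycleOf v) := by
  intro a ha
  rw [cycleOf_apply] at ha ⊢
  split_ifs at ha ⊢
  · exact hσ a ha
  · exact absurd rfl ha

theorem FollowsArcs.transGen [Fintype V] (hσ : FollowsArcs f σ) {v : V} (hv : σ v ≠ v) :
    TransGen (fun a b => f a = some b) v v := by
  have hmoved (k : ℕ) : σ ((σ ^ k) v) ≠ (σ ^ k) v :=
    mem_support.mp (pow_apply_mem_support.mpr (mem_support.mpr hv))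
  have hchain (k : ℕ) : TransGen (fun a b => f a = some b) v ((σ ^ (k + 1)) v) := by
    induction k with
    | zero => exact .single (by simpa using hσ v hv)
    | succ k ih =>
      rw [pow_succ', mul_apply]
      exact ih.tail (hσ _ (hmoved (k + 1)))
  obtain ⟨k, hk⟩ := Nat.exists_eq_add_one_of_ne_zero (orderOf_pos σ).ne'
  simpa [← hk, pow_orderOf_eq_one] using hchain k

theorem FollowsArcs.mem_cycleFactorsFinset [Fintype V] [DecidableEq V] (hσ : FollowsArcs f σ)
    (hc : FollowsArcs f c) (hcyc : c.IsCycle) (hnd : ¬ σ.Disjoint c) :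
    c ∈ σ.cycleFactorsFinset := by
  obtain ⟨a, hσa, hca⟩ : ∃ a, σ a ≠ a ∧ c a ≠ a := by
    simpa [Perm.Disjoint, not_or] using hnd
  have hcσ : ∀ {x}, c x ≠ x → σ.cycleOf a x ≠ x → c x = σ.cycleOf a x :=
    hc.apply_eq (hσ.cycleOf a)
  have hca' : c = σ.cycleOf a :=
    hcyc.eq_on_support_inter_nonempty_congr (isCycle_cycleOf σ hσa)
      (fun x hx => by
        simp only [Finset.mem_inter, mem_support] at hx
        exact hcσ hx.1 hx.2)
      (hcσ hca (by rwa [cycleOf_apply_self])) (mem_support.mpr hca)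
  rw [hca']
  exact cycleOf_mem_cycleFactorsFinset_iff.mpr (mem_support.mpr hσa)

theorem exists_iterate_eq_of_transGen {g : V → V} {a b : V}
    (h : TransGen (fun a b => g a = b) a b) : ∃ n, g^[n + 1] a = b := by
  induction h with
  | single hab => exact ⟨0, hab⟩
  | tail _ hbc ih =>
    obtain ⟨n, hn⟩ := ih
    exact ⟨n + 1, by rw [Function.iterate_succ_apply', hn, hbc]⟩

theorem exists_isCycle_followsArcs [Fintype V] [DecidableEq V] (hloop : ∀ v, f v ≠ some v)
    {v : V} (hv : TransGen (fun a b => f a = some b) v v) :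
    ∃ c : Perm V, c.IsCycle ∧ FollowsArcs f c := by
  set g : V → V := fun a => (f a).getD a
  have hg {a b : V} (h : f a = some b) : g a = b := by simp [g, h]
  -- `g` permutes its periodic points; the vertices on cycles of `f` are among them.
  set π : Perm V := ofSubtype ((Function.bijOn_periodicPts g).equiv g)
  have hπ {a : V} (ha : a ∈ Function.periodicPts g) : π a = g a :=
    ofSubtype_apply_of_mem _ ha
  have hπf : FollowsArcs f π := by
    intro a ha
    by_cases hP : a ∈ Function.periodicPts g
    · rw [hπ hP] at ha ⊢
      cases hfa : f a with
      | none => simp [g, hfa] at ha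
      | some b => rw [hg hfa]
    · exact absurd (ofSubtype_apply_of_not_mem _ hP) ha
  have hπv : π v ≠ v := by
    obtain ⟨n, hn⟩ := exists_iterate_eq_of_transGen (TransGen.mono (fun a b => @hg a b) _ _ hv)
    obtain ⟨b, hvb, -⟩ := TransGen.head'_iff.mp hv
    rw [hπ (Function.mk_mem_periodicPts n.succ_pos hn), hg hvb]
    exact fun h => hloop v (h ▸ hvb)
  exact ⟨π.cycleOf v, isCycle_cycleOf π hπv, hπf.cycleOf v⟩

end FollowsArcs

section CycleSign

variable {V : Type*} [Fintype V] [DecidableEq V]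

/-- `(-1)` to the number of nontrivial cycles of `σ`. -/
def cycleSign (σ : Perm V) : ℤˣ := sign σ * (-1) ^ #σ.support

@[simp]
theorem cycleSign_one : cycleSign (1 : Perm V) = 1 := by
  simp [cycleSign]

theorem Equiv.Perm.Disjoint.cycleSign_mul_of_isCycle {σ c : Perm V} (hd : σ.Disjoint c)
    (hc : c.IsCycle) : cycleSign (σ * c) = -cycleSign σ := by
  rw [cycleSign, cycleSign, Perm.sign_mul, hd.card_support_mul, hc.sign, pow_add, mul_neg,
    neg_mul, mul_mul_mul_comm, Int.units_mul_self, mul_one]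

theorem sum_cycleSign_followsArcs {f : V → Option V} (hloop : ∀ v, f v ≠ some v) :
    ∑ σ with FollowsArcs f σ, (cycleSign σ : ℤ) =
      if ∀ v, ¬ TransGen (fun a b => f a = some b) v v then 1 else 0 := by
  split_ifs with hacyc
  · have hone : ({σ | FollowsArcs f σ} : Finset (Perm V)) = {1} := by
      refine eq_singleton_iff_unique_mem.mpr
        ⟨mem_filter.mpr ⟨mem_univ _, fun v h => absurd rfl h⟩, fun σ hσ => ?_⟩
      by_contra hne
      obtain ⟨v, hv⟩ := not_forall.mp (mt Equiv.ext hne)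
      exact hacyc v ((mem_filter.mp hσ).2.transGen hv)
    simp [hone]
  push Not at hacyc
  obtain ⟨v, hv⟩ := hacyc
  obtain ⟨c, hc, hcf⟩ := exists_isCycle_followsArcs hloop hv
  -- Toggling the cycle `c` is a sign-reversing involution.
  have hdisj {σ : Perm V} (hσ : σ ∈ ({σ | FollowsArcs f σ} : Finset (Perm V)))
      (hd : ¬ σ.Disjoint c) : (σ * c⁻¹).Disjoint c :=
    disjoint_mul_inv_of_mem_cycleFactorsFinset
      ((mem_filter.mp hσ).2.mem_cycleFactorsFinset hcf hc hd)
  have hnd {σ : Perm V} (hd : σ.Disjoint c) : ¬ (σ * c).Disjoint c := fun h =>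
    hc.ne_one (disjoint_refl_iff.mp (by simpa using hd.inv_left.mul_left h))
  refine sum_involution (fun σ _ => if σ.Disjoint c then σ * c else σ * c⁻¹)
    (fun σ hσ => ?_) (fun σ _ _ => ?_) (fun σ hσ => ?_) (fun σ hσ => ?_)
  · split_ifs with hd
    · simp [hd.cycleSign_mul_of_isCycle hc]
    · conv_lhs => rw [← inv_mul_cancel_right σ c, (hdisj hσ hd).cycleSign_mul_of_isCycle hc]
      simp
  · split_ifs <;> simpa using hc.ne_one
  · have hσf := (mem_filter.mp hσ).2
    split_ifs with hd
    · exact mem_filter.mpr ⟨mem_univ _, hσf.mul_of_disjoint hcf hd⟩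
    · exact mem_filter.mpr ⟨mem_univ _, hσf.mul_inv_of_disjoint (hdisj hσ hd)⟩
  · split_ifs with hd hd' hd'
    · exact absurd hd' (hnd hd)
    · simp
    · simp
    · exact absurd (hdisj hσ hd) hd'

end CycleSign

section Laplacian

variable {V : Type*} [Fintype V] [DecidableEq V] {R : Type*} [CommRing R]

def laplacian (wgt : V → V → R) : Matrix V V R :=
  Matrix.diagonal (fun v => ∑ w, wgt v w) - Matrix.of wgt

/-- The coefficient of the choice `o` of an out-arc at `v` (or of a root, `o = none`) in the
entry `(laplacian wgt + t • 1) v (σ v)`; loops are excluded since they cancel in the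
Laplacian. -/
def arcCoeff (σ : Perm V) (v : V) (o : Option V) : ℤ :=
  if σ v = v then (if o = some v then 0 else 1) else (if o = some (σ v) then -1 else 0)

theorem laplacian_add_smul_one_apply (wgt : V → V → R) (t : R) (σ : Perm V) (v : V) :
    (laplacian wgt + t • 1) v (σ v) = ∑ o, (arcCoeff σ v o : R) * o.elim t (wgt v) := by
  by_cases hv : σ v = v
  · simp [laplacian, arcCoeff, hv, Fintype.sum_option, sum_ite, filter_ne', sum_erase_eq_sub,
      add_comm, add_sub_assoc]
  · simp [laplacian, arcCoeff, hv, Ne.symm hv]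

theorem prod_arcCoeff (σ : Perm V) (f : V → Option V) :
    ∏ v, arcCoeff σ v (f v) =
      if (∀ v, f v ≠ some v) ∧ FollowsArcs f σ then (-1) ^ #σ.support else 0 := by
  split_ifs with h
  · rw [prod_congr rfl fun v _ => (?_ : arcCoeff σ v (f v) = if σ v = v then 1 else -1),
      prod_ite, prod_const_one, prod_const, one_mul]
    · rfl
    · by_cases hv : σ v = v
      · simp [arcCoeff, hv, h.1 v]
      · simp [arcCoeff, hv, h.2 v hv]
  · obtain ⟨v, hv⟩ : ∃ v, arcCoeff σ v (f v) = 0 := by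
      simp only [not_and_or, not_forall, not_not, FollowsArcs] at h
      rcases h with ⟨v, hv⟩ | ⟨v, hσv, hfv⟩
      · refine ⟨v, ?_⟩
        by_cases hσv : σ v = v
        · simp [arcCoeff, hv, hσv]
        · simp [arcCoeff, hv, hσv, Ne.symm hσv]
      · exact ⟨v, by simp [arcCoeff, hσv, hfv]⟩
    exact prod_eq_zero (mem_univ v) hv

theorem sum_sign_mul_prod_arcCoeff (f : V → Option V) :
    ∑ σ : Perm V, (sign σ : ℤ) * ∏ v, arcCoeff σ v (f v) =
      if ∀ v, ¬ TransGen (fun a b => f a = some b) v v then 1 else 0 := by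
  simp_rw [prod_arcCoeff, mul_ite, mul_zero]
  by_cases hloop : ∀ v, f v ≠ some v
  · simp_rw [and_iff_right hloop]
    rw [← sum_filter, ← sum_cycleSign_followsArcs hloop]
    simp [cycleSign]
  · simp only [hloop, false_and, if_false, sum_const_zero]
    exact (if_neg fun hacyc => hloop fun v hv => hacyc v (.single hv)).symm

theorem det_laplacian_add_smul_one (wgt : V → V → R) (t : R) :
    (laplacian wgt + t • 1).det = forestEnum (fun _ _ => True) wgt t := by
  calc (laplacian wgt + t • 1).det
      = ∑ σ : Perm V, (sign σ : R) * ∏ v, (laplacian wgt + t • 1) v (σ v) := by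
        rw [← Matrix.det_transpose, Matrix.det_apply]
        simp [Units.smul_def]
    _ = ∑ f : V → Option V, ∑ σ : Perm V,
          ((sign σ : ℤ) * ∏ v, arcCoeff σ v (f v) : ℤ) * ∏ v, (f v).elim t (wgt v) := by
        simp_rw [laplacian_add_smul_one_apply, prod_univ_sum, Fintype.piFinset_univ, mul_sum,
          prod_mul_distrib]
        rw [sum_comm]
        push_cast
        simp_rw [mul_assoc]
    _ = forestEnum (fun _ _ => True) wgt t := by
        simp_rw [← sum_mul, ← Int.cast_sum, sum_sign_mul_prod_arcCoeff]
        simp only [forestEnum, IsRootedForest, implies_true, true_and, sum_filter, Int.cast_ite,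
          Int.cast_one, Int.cast_zero, ite_mul, one_mul, zero_mul]
        congr!

end Laplacian

theorem forestEnum_eq_forestEnum_true {V : Type*} [Fintype V] {R : Type*} [CommRing R]
    {A : V → V → Prop} {wgt : V → V → R} (hA : ∀ v w, ¬ A v w → wgt v w = 0) (t : R) :
    forestEnum A wgt t = forestEnum (fun _ _ => True) wgt t := by
  refine sum_subset (fun f hf => ?_) (fun f hf hfA => ?_)
  · exact mem_filter.mpr ⟨mem_univ _, fun _ _ _ => trivial, (mem_filter.mp hf).2.2⟩
  · obtain ⟨v, w, hvw, hvwA⟩ : ∃ v w, f v = some w ∧ ¬ A v w := by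
      by_contra! h
      exact hfA (mem_filter.mpr ⟨mem_univ _, h, (mem_filter.mp hf).2.2⟩)
    exact prod_eq_zero (mem_univ v) (by simpa [hvw] using hA v w hvwA)

theorem prod_finset_fin_succ {M : Type*} [CommMonoid M] {n : ℕ} (F : Finset (Fin (n + 1)) → M) :
    ∏ S, F S = (∏ S : Finset (Fin n), F (S.image Fin.succ)) *
      ∏ S : Finset (Fin n), F (insert 0 (S.image Fin.succ)) := by
  have hinj : Set.InjOn (fun S : Finset (Fin n) => S.image Fin.succ)
      (univ : Finset (Finset (Fin n))) :=
    fun _ _ _ _ h => image_injective (Fin.succ_injective n) h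
  rw [← powerset_univ, Fin.univ_succ, cons_eq_insert, prod_powerset_insert (by simp),
    map_eq_image, Function.Embedding.coeFn_mk, powerset_image, powerset_univ, prod_image hinj,
    prod_image hinj]

theorem Matrix.det_fromBlocks_add_smul_one_neg_smul_one {W R : Type*} [Fintype W]
    [DecidableEq W] [CommRing R] (N : Matrix W W R) (a b : R) :
    (fromBlocks (N + a • 1) (-(a • 1)) (-(b • 1)) (N + b • 1)).det =
      N.det * (N + (a + b) • 1).det := by
  have hreduce :
      fromBlocks 1 0 (-1) 1 * fromBlocks (N + a • 1) (-(a • 1)) (-(b • 1)) (N + b • 1) *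
        fromBlocks 1 0 1 1 = fromBlocks N (-(a • 1)) 0 (N + (a + b) • 1) := by
    simp only [fromBlocks_multiply, fromBlocks_inj]
    refine ⟨?_, ?_, ?_, ?_⟩ <;>
      simp only [Matrix.mul_one, Matrix.mul_zero, Matrix.one_mul, Matrix.zero_mul,
        Matrix.neg_mul, add_smul, neg_neg] <;>
      abel
  have hunit (C : Matrix W W R) : (fromBlocks 1 0 C 1).det = 1 := by simp
  rw [← det_fromBlocks_zero₂₁, ← hreduce, det_mul, det_mul, hunit, hunit, one_mul, mul_one]

section Cube

variable {R : Type*} [CommRing R]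

theorem cubeWeight_eq_zero_of_not_cubeArc {n : ℕ} (x : Fin n → Bool → R)
    {u v : Fin n → Bool} (h : ¬ cubeArc n u v) : cubeWeight n x u v = 0 :=
  sum_eq_zero fun i _ => if_neg fun hi => h ⟨i, hi⟩

theorem sum_cubeWeight {n : ℕ} (x : Fin n → Bool → R) (u : Fin n → Bool) :
    ∑ v, cubeWeight n x u v = ∑ i, x i (!(u i)) := by
  simp only [cubeWeight]
  rw [sum_comm]
  simp

theorem cubeWeight_cons {n : ℕ} (x : Fin (n + 1) → Bool → R) (b b' : Bool)
    (w w' : Fin n → Bool) :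
    cubeWeight (n + 1) x (Fin.cons b w) (Fin.cons b' w') =
      (if b' = !b ∧ w' = w then x 0 b' else 0) +
        if b' = b then cubeWeight n (fun i => x i.succ) w w' else 0 := by
  simp only [cubeWeight, Fin.sum_univ_succ, Fin.cons_zero, Fin.update_cons_zero, Fin.cons_succ,
    ← Fin.cons_update, Fin.cons_inj]
  by_cases hb : b' = b <;> simp [hb]

def cubeSplit (n : ℕ) : (Fin (n + 1) → Bool) ≃ (Fin n → Bool) ⊕ (Fin n → Bool) :=
  (Fin.consEquiv fun _ => Bool).symm.trans (Equiv.boolProdEquivSum _)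

theorem laplacian_cubeWeight_cons {n : ℕ} (x : Fin (n + 1) → Bool → R) (b b' : Bool)
    (w w' : Fin n → Bool) :
    laplacian (cubeWeight (n + 1) x) (Fin.cons b w) (Fin.cons b' w') =
      if b' = b then (laplacian (cubeWeight n fun i => x i.succ) + x 0 (!b) • 1) w w'
      else -(x 0 b' • (1 : Matrix (Fin n → Bool) (Fin n → Bool) R)) w w' := by
  simp only [laplacian, Matrix.sub_apply, Matrix.diagonal_apply, Matrix.of_apply, sum_cubeWeight,
    Fin.sum_univ_succ, Fin.cons_zero, Fin.cons_succ, cubeWeight_cons, Fin.cons_inj]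
  by_cases hw : w = w' <;> cases b <;> cases b' <;> simp [hw, eq_comm] <;> ring

theorem reindex_laplacian_cubeWeight_add_smul_one {n : ℕ} (x : Fin (n + 1) → Bool → R)
    (t : R) :
    reindex (cubeSplit n) (cubeSplit n) (laplacian (cubeWeight (n + 1) x) + t • 1) =
      fromBlocks (laplacian (cubeWeight n fun i => x i.succ) + (t + x 0 true) • 1)
        (-(x 0 true • 1)) (-(x 0 false • 1))
        (laplacian (cubeWeight n fun i => x i.succ) + (t + x 0 false) • 1) := by
  have hinl (w : Fin n → Bool) : (cubeSplit n).symm (.inl w) = Fin.cons false w := rfl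
  have hinr (w : Fin n → Bool) : (cubeSplit n).symm (.inr w) = Fin.cons true w := rfl
  ext (w | w) (w' | w') <;>
    simp [hinl, hinr, laplacian_cubeWeight_cons, Matrix.one_apply, add_assoc, ← ite_add_zero,
      add_comm t]

theorem det_laplacian_cubeWeight_add_smul_one (n : ℕ) (x : Fin n → Bool → R) (t : R) :
    (laplacian (cubeWeight n x) + t • 1).det =
      ∏ S : Finset (Fin n), (t + ∑ i ∈ S, (x i false + x i true)) := by
  induction n generalizing t with
  | zero => simp [Matrix.det_unique, laplacian, cubeWeight, eq_empty_of_isEmpty]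
  | succ n ih =>
    rw [← det_reindex_self (cubeSplit n), reindex_laplacian_cubeWeight_add_smul_one]
    simp_rw [add_smul, ← add_assoc]
    rw [det_fromBlocks_add_smul_one_neg_smul_one, add_assoc, ← add_smul, ih, ih,
      prod_finset_fin_succ]
    congr 1
    · simp [sum_image (Fin.succ_injective n).injOn]
    · refine prod_congr rfl fun S _ => ?_
      rw [sum_insert (by simp), sum_image (Fin.succ_injective n).injOn]
      ring

end Cube

/-- The weighted rooted-forest enumerator of the hypercube:
`F_{C_n}(t;x) = ∏_{S ⊆ [n]} (t + ∑_{i ∈ S} (x_{i,0} + x_{i,1}))`,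
where an arc of direction `i` and spin `ε` has weight `x i ε`
(`false` encodes spin 0 and `true` encodes spin 1). -/
theorem hypercube_weighted_forest_enumerator {R : Type*} [CommRing R]
    (n : ℕ) (x : Fin n → Bool → R) (t : R) :
    forestEnum (cubeArc n) (cubeWeight n x) t =
      ∏ S : Finset (Fin n), (t + ∑ i ∈ S, (x i false + x i true)) := by
  rw [forestEnum_eq_forestEnum_true (wgt := cubeWeight n x)
      (fun _ _ => cubeWeight_eq_zero_of_not_cubeArc x),
    ← det_laplacian_add_smul_one, det_laplacian_cubeWeight_add_smul_one]
end

section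
/- Let G be a weighted digraph and K_2 the complete graph on two vertices with arc weights x_0 and x_1 (weight x_ε on the arc pointing into vertex ε). Then the rooted-forest enumerator of the Cartesian product H = G × K_2 satisfies F_H(t) = F_G(t) · F_G(t + x_0 + x_1), where in H the arcs coming from an arc a of G keep the weight w_a of a. -/
open scoped Classical
open Polynomial

noncomputable section AuxMF

namespace K2Aux

variable {V : Type*} [Fintype V] {R : Type*} [CommRing R]

def stepFn {V : Type*} (g : V → Option V) (v : V) : V := (g v).getD v

def AcyclicFn {V : Type*} (g : V → Option V) : Prop :=
  ∀ v : V, ¬ Relation.TransGen (fun a b : V => g a = some b) v v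

def fullSum (w : V → V → R) (t : R) : R :=
  ∑ g ∈ Finset.univ.filter (fun g : V → Option V => AcyclicFn g),
    ∏ v : V, (g v).elim t (w v)

def Mmat (w : V → V → R) (t : R) : Matrix V V R :=
  Matrix.of fun u v => (if u = v then t + ∑ z, w v z else 0) - w v u

def ent (w : V → V → R) (t : R) (u v : V) : Option V → R
  | none => if u = v then t else 0
  | some z => (if u = v then w v z else 0) - (if z = u then w v u else 0)

lemma sum_ent (w : V → V → R) (t : R) (u v : V) :
    ∑ c : Option V, ent w t u v c = Mmat w t u v := by
  rw [Fintype.sum_option]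
  simp only [ent, Mmat, Matrix.of_apply, Finset.sum_sub_distrib]
  rw [Finset.sum_ite_eq' Finset.univ u (fun _ => w v u)]
  by_cases h : u = v <;> simp [h] <;> ring


def AdmS (g : V → Option V) : Finset (Equiv.Perm V) :=
  Finset.univ.filter (fun σ => ∀ v : V, σ v = v ∨ g v = some (σ v))

lemma prod_ent_eq_zero {g : V → Option V} {σ : Equiv.Perm V} (w : V → V → R) (t : R)
    (h : σ ∉ AdmS g) : ∏ v : V, ent w t (σ v) v (g v) = 0 := by
  simp only [AdmS, Finset.mem_filter, Finset.mem_univ, true_and, not_forall] at h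
  obtain ⟨v, hv⟩ := h
  push_neg at hv
  apply Finset.prod_eq_zero (Finset.mem_univ v)
  cases hgv : g v with
  | none => simp [ent, hv.1]
  | some z =>
      have hz : z ≠ σ v := by
        intro h; apply hv.2; rw [hgv, h]
      simp [ent, hv.1, hz]

lemma admS_eq_one {g : V → Option V} (hg : AcyclicFn g) : AdmS g = {1} := by
  ext σ
  simp only [AdmS, Finset.mem_filter, Finset.mem_univ, true_and, Finset.mem_singleton]
  constructor
  · intro hσ
    by_contra hne
    obtain ⟨v, hv⟩ : ∃ v, σ v ≠ v := by
      by_contra h; push_neg at h; exact hne (Equiv.ext h)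
    -- all iterates are non-fixed
    have hiter : ∀ k : ℕ, σ ((σ ^ k) v) ≠ (σ ^ k) v := by
      intro k
      induction k with
      | zero => simpa using hv
      | succ k ih =>
          rw [pow_succ', Equiv.Perm.mul_apply]
          intro h
          exact ih (σ.injective h)
    have harc : ∀ k : ℕ, g ((σ ^ k) v) = some ((σ ^ (k+1)) v) := by
      intro k
      rcases hσ ((σ ^ k) v) with h | h
      · exact absurd h (hiter k)
      · rw [pow_succ', Equiv.Perm.mul_apply]; exact h
    have hchain : ∀ k : ℕ, Relation.TransGen (fun a b : V => g a = some b) v ((σ ^ (k+1)) v) := by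
      intro k
      induction k with
      | zero => exact Relation.TransGen.single (by simpa using harc 0)
      | succ k ih => exact Relation.TransGen.tail ih (harc (k+1))
    have hm : (0:ℕ) < orderOf σ := orderOf_pos σ
    have := hchain (orderOf σ - 1)
    rw [Nat.sub_add_cancel hm, pow_orderOf_eq_one] at this
    exact hg v this
  · rintro rfl v; left; rfl

lemma Tsum_acyclic {g : V → Option V} (w : V → V → R) (t : R) (hg : AcyclicFn g) :
    ∑ σ : Equiv.Perm V, ((Equiv.Perm.sign σ : ℤ) : R) * ∏ v : V, ent w t (σ v) v (g v)
      = ∏ v : V, (g v).elim t (w v) := by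
  rw [← Finset.sum_subset (Finset.subset_univ (AdmS g))
      (fun σ _ hσ => by rw [prod_ent_eq_zero w t hσ, mul_zero])]
  rw [admS_eq_one hg]
  simp only [Finset.sum_singleton, Equiv.Perm.sign_one, Units.val_one, Int.cast_one, one_mul,
    Equiv.Perm.one_apply]
  apply Finset.prod_congr rfl
  intro v _
  cases hgv : g v with
  | none => simp [ent]
  | some z =>
      have hz : z ≠ v := by
        rintro rfl
        exact hg _ (Relation.TransGen.single hgv)
      simp [ent, hz]


lemma transGen_exists_iterate {V : Type*} {g : V → Option V} {a b : V}
    (h : Relation.TransGen (fun x y => g x = some y) a b) :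
    ∃ n : ℕ, 0 < n ∧ (stepFn g)^[n] a = b ∧
      ∀ k < n, g ((stepFn g)^[k] a) = some ((stepFn g)^[k+1] a) := by
  induction h with
  | single hab =>
      refine ⟨1, one_pos, by simp [stepFn, hab], ?_⟩
      intro k hk
      rw [Nat.lt_one_iff] at hk
      subst hk
      simp [stepFn, hab]
  | tail hab hbc ih =>
      obtain ⟨n, hn, hG, hall⟩ := ih
      refine ⟨n + 1, Nat.succ_pos n, ?_, ?_⟩
      · rw [Function.iterate_succ_apply', hG]
        simp [stepFn, hbc]
      · intro k hk
        rcases Nat.lt_succ_iff_lt_or_eq.mp hk with h | rfl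
        · exact hall k h
        · rw [Function.iterate_succ_apply', hG]
          simp [stepFn, hbc]

lemma Tsum_cyclic {g : V → Option V} (w : V → V → R) (t : R) (hg : ¬ AcyclicFn g) :
    ∑ σ : Equiv.Perm V, ((Equiv.Perm.sign σ : ℤ) : R) * ∏ v : V, ent w t (σ v) v (g v) = 0 := by
  by_cases hloop : ∃ v, g v = some v
  · obtain ⟨v, hv⟩ := hloop
    apply Finset.sum_eq_zero
    intro σ _
    have hz : ent w t (σ v) v (g v) = 0 := by
      rw [hv]
      simp only [ent]
      by_cases h : σ v = v
      · simp [h]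
      · rw [if_neg h, if_neg (fun hh => h hh.symm), sub_zero]
    rw [Finset.prod_eq_zero (Finset.mem_univ v) hz, mul_zero]
  push_neg at hloop
  obtain ⟨v₀, hv₀⟩ : ∃ v : V, Relation.TransGen (fun a b : V => g a = some b) v v := by
    simpa [AcyclicFn, not_forall] using hg
  obtain ⟨n, hn, hGn, hall⟩ := transGen_exists_iterate hv₀
  set G := stepFn g with hGdef
  have hper : ∀ k, G^[k + n] v₀ = G^[k] v₀ := fun k => by
    rw [Function.iterate_add_apply, hGn]
  have hmod : ∀ k, G^[k] v₀ = G^[k % n] v₀ := by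
    intro k
    induction k using Nat.strong_induction_on with
    | _ k ih =>
      rcases lt_or_ge k n with h | h
      · rw [Nat.mod_eq_of_lt h]
      · have h1 : k = (k - n) + n := (Nat.sub_add_cancel h).symm
        rw [Nat.mod_eq_sub_mod h]
        calc G^[k] v₀ = G^[(k - n) + n] v₀ := by rw [← h1]
          _ = G^[k - n] v₀ := hper _
          _ = G^[(k - n) % n] v₀ := ih _ (by omega)
  have harc : ∀ k, g (G^[k] v₀) = some (G^[k+1] v₀) := by
    intro k
    rw [hmod k, hall (k % n) (Nat.mod_lt _ hn)]
    congr 1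
    rw [Function.iterate_succ_apply', Function.iterate_succ_apply', ← hmod k]
  set C : Finset V := (Finset.range n).image (fun k => G^[k] v₀) with hCdef
  have memC : ∀ x, x ∈ C ↔ ∃ k, G^[k] v₀ = x := by
    intro x
    constructor
    · intro hx
      rw [hCdef, Finset.mem_image] at hx
      obtain ⟨k, _, hk⟩ := hx
      exact ⟨k, hk⟩
    · rintro ⟨k, hk⟩
      rw [hCdef, Finset.mem_image]
      exact ⟨k % n, Finset.mem_range.2 (Nat.mod_lt _ hn), by rw [← hmod]; exact hk⟩
  have memC' : ∀ x ∈ C, ∃ k, k < n ∧ G^[k] v₀ = x := by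
    intro x hx
    rw [hCdef, Finset.mem_image] at hx
    obtain ⟨k, hk, hkx⟩ := hx
    exact ⟨k, Finset.mem_range.1 hk, hkx⟩
  have hv₀C : v₀ ∈ C := (memC v₀).2 ⟨0, rfl⟩
  have hCG : ∀ x ∈ C, G x ∈ C := by
    intro x hx
    obtain ⟨k, hk⟩ := (memC x).1 hx
    exact (memC _).2 ⟨k + 1, by rw [Function.iterate_succ_apply', hk]⟩
  have hCarc : ∀ x ∈ C, g x = some (G x) := by
    intro x hx
    obtain ⟨k, hk⟩ := (memC x).1 hx
    rw [← hk, harc k, Function.iterate_succ_apply']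
  have hCne : ∀ x ∈ C, G x ≠ x := by
    intro x hx h
    exact hloop x (by rw [hCarc x hx, h])
  have hCiter : ∀ x ∈ C, ∀ k, G^[k] x ∈ C := by
    intro x hx k
    obtain ⟨j, hj⟩ := (memC x).1 hx
    exact (memC _).2 ⟨k + j, by rw [Function.iterate_add_apply, hj]⟩
  have hCn : ∀ x ∈ C, G^[n] x = x := by
    intro x hx
    obtain ⟨j, hj⟩ := (memC x).1 hx
    rw [← hj, ← Function.iterate_add_apply, Nat.add_comm n j, hper]
  have hinvmem : ∀ x ∈ C, G^[n-1] x ∈ C := fun x hx => hCiter x hx (n-1)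
  have hGpre : ∀ x ∈ C, G (G^[n-1] x) = x := by
    intro x hx
    rw [← Function.iterate_succ_apply' G (n-1) x]
    simp only [Nat.succ_eq_add_one]
    rw [Nat.sub_add_cancel hn, hCn x hx]
  let π : Equiv.Perm V :=
    { toFun := fun x => if x ∈ C then G x else x
      invFun := fun x => if x ∈ C then G^[n-1] x else x
      left_inv := by
        intro x
        by_cases hx : x ∈ C
        · show (if (if x ∈ C then G x else x) ∈ C then G^[n-1] (if x ∈ C then G x else x)
              else (if x ∈ C then G x else x)) = x
          rw [if_pos hx, if_pos (hCG x hx), ← Function.iterate_succ_apply]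
          simp only [Nat.succ_eq_add_one]
          rw [Nat.sub_add_cancel hn, hCn x hx]
        · show (if (if x ∈ C then G x else x) ∈ C then G^[n-1] (if x ∈ C then G x else x)
              else (if x ∈ C then G x else x)) = x
          rw [if_neg hx, if_neg hx]
      right_inv := by
        intro x
        by_cases hx : x ∈ C
        · show (if (if x ∈ C then G^[n-1] x else x) ∈ C then G (if x ∈ C then G^[n-1] x else x)
              else (if x ∈ C then G^[n-1] x else x)) = x
          rw [if_pos hx, if_pos (hinvmem x hx), hGpre x hx]
        · show (if (if x ∈ C then G^[n-1] x else x) ∈ C then G (if x ∈ C then G^[n-1] x else x)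
              else (if x ∈ C then G^[n-1] x else x)) = x
          rw [if_neg hx, if_neg hx] }
  have hπ : ∀ x, π x = if x ∈ C then G x else x := fun _ => rfl
  have hπinv : ∀ x, π⁻¹ x = if x ∈ C then G^[n-1] x else x := fun _ => rfl
  have hπC : ∀ x ∈ C, π x = G x := fun x hx => by rw [hπ, if_pos hx]
  have hπnC : ∀ x, x ∉ C → π x = x := fun x hx => by rw [hπ, if_neg hx]
  have hπinvC : ∀ x ∈ C, π⁻¹ x = G^[n-1] x := fun x hx => by rw [hπinv, if_pos hx]
  have hπinvnC : ∀ x, x ∉ C → π⁻¹ x = x := fun x hx => by rw [hπinv, if_neg hx]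
  have hπpow : ∀ k : ℕ, (π ^ k) v₀ = G^[k] v₀ := by
    intro k
    induction k with
    | zero => rfl
    | succ k ih =>
        rw [pow_succ', Equiv.Perm.mul_apply, ih, hπC _ (hCiter v₀ hv₀C k),
          Function.iterate_succ_apply']
  have hcycle : π.IsCycle := by
    refine ⟨v₀, ?_, ?_⟩
    · rw [hπC v₀ hv₀C]; exact hCne v₀ hv₀C
    · intro y hy
      have hyC : y ∈ C := by
        by_contra h
        exact hy (hπnC y h)
      obtain ⟨k, hk⟩ := (memC y).1 hyC
      exact ⟨(k : ℤ), by rw [zpow_natCast, hπpow, hk]⟩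
  have hsupp : π.support = C := by
    ext y
    rw [Equiv.Perm.mem_support]
    constructor
    · intro hy
      by_contra h
      exact hy (hπnC y h)
    · intro hy
      rw [hπC y hy]
      exact hCne y hy
  have hsign : Equiv.Perm.sign π = -(-1) ^ C.card := by rw [hcycle.sign, hsupp]
  -- dichotomy for admissible permutations
  have hprop : ∀ x ∈ C, ∀ σ ∈ AdmS g, σ x = G x → ∀ k : ℕ, σ (G^[k] x) = G^[k+1] x := by
    intro x hx σ hσ hσx k
    induction k with
    | zero => simpa using hσx
    | succ k ih =>
        have hy : G^[k] x ∈ C := hCiter x hx k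
        have hy' : G^[k+1] x ∈ C := hCiter x hx (k+1)
        rcases (Finset.mem_filter.1 hσ).2 (G^[k+1] x) with h | h
        · exfalso
          have heq : G^[k] x = G^[k+1] x := σ.injective (by rw [ih, h])
          exact hCne _ hy (by rw [← Function.iterate_succ_apply' G k x, ← heq])
        · rw [hCarc _ hy'] at h
          have h2 := Option.some.inj h
          rw [Function.iterate_succ_apply' G (k+1) x]
          exact h2.symm
  have hdich : ∀ σ ∈ AdmS g, (∀ x ∈ C, σ x = x) ∨ (∀ x ∈ C, σ x = G x) := by
    intro σ hσ
    have hC2 : ∀ x ∈ C, σ x = x ∨ σ x = G x := by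
      intro x hx
      rcases (Finset.mem_filter.1 hσ).2 x with h | h
      · exact Or.inl h
      · right
        rw [hCarc x hx] at h
        exact (Option.some.inj h).symm
    by_cases hfix : σ v₀ = v₀
    · left
      intro x hx
      by_contra hne
      have hx' : σ x = G x := (hC2 x hx).resolve_left hne
      obtain ⟨j, hjn, hj⟩ := memC' x hx
      have hGx : G^[n - j] x = v₀ := by
        rw [← hj, ← Function.iterate_add_apply, Nat.sub_add_cancel (le_of_lt hjn), hGn]
      have h2 := hprop x hx σ hσ hx' (n - j)
      rw [Function.iterate_succ_apply', hGx] at h2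
      exact hCne v₀ hv₀C (by rw [← h2, hfix])
    · right
      intro x hx
      have hσv₀ : σ v₀ = G v₀ := (hC2 v₀ hv₀C).resolve_left hfix
      obtain ⟨k, hk⟩ := (memC x).1 hx
      have h2 := hprop v₀ hv₀C σ hσ hσv₀ k
      rw [Function.iterate_succ_apply'] at h2
      rw [hk] at h2
      exact h2
  have hmemπ : ∀ σ ∈ AdmS g, (∀ x ∈ C, σ x = x) → σ * π ∈ AdmS g := by
    intro σ hσ hfixC
    refine Finset.mem_filter.2 ⟨Finset.mem_univ _, ?_⟩
    intro x
    by_cases hx : x ∈ C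
    · right
      rw [Equiv.Perm.mul_apply, hπC x hx, hfixC _ (hCG x hx), hCarc x hx]
    · rw [Equiv.Perm.mul_apply, hπnC x hx]
      exact (Finset.mem_filter.1 hσ).2 x
  have hfixC' : ∀ σ : Equiv.Perm V, (∀ x ∈ C, σ x = G x) → ∀ x ∈ C, (σ * π⁻¹) x = x := by
    intro σ hGC x hx
    rw [Equiv.Perm.mul_apply, hπinvC x hx, hGC _ (hinvmem x hx), hGpre x hx]
  have hmemπinv : ∀ σ ∈ AdmS g, (∀ x ∈ C, σ x = G x) → σ * π⁻¹ ∈ AdmS g := by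
    intro σ hσ hGC
    refine Finset.mem_filter.2 ⟨Finset.mem_univ _, ?_⟩
    intro x
    by_cases hx : x ∈ C
    · exact Or.inl (hfixC' σ hGC x hx)
    · rw [Equiv.Perm.mul_apply, hπinvnC x hx]
      exact (Finset.mem_filter.1 hσ).2 x
  have hflip : ∀ σ ∈ AdmS g, (∀ x ∈ C, σ x = x) →
      (((Equiv.Perm.sign σ : ℤ) : R) * ∏ v : V, ent w t (σ v) v (g v))
      + (((Equiv.Perm.sign (σ * π) : ℤ) : R) * ∏ v : V, ent w t ((σ * π) v) v (g v)) = 0 := by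
    intro σ hσ hfixC
    have h1 : ∏ v : V, ent w t ((σ * π) v) v (g v)
        = (-1 : R) ^ C.card * ∏ v : V, ent w t (σ v) v (g v) := by
      rw [← Finset.prod_mul_prod_compl C (fun v => ent w t ((σ * π) v) v (g v)),
        ← Finset.prod_mul_prod_compl C (fun v => ent w t (σ v) v (g v))]
      have hCpart : ∀ v ∈ C, ent w t ((σ * π) v) v (g v) = - ent w t (σ v) v (g v) := by
        intro v hv
        rw [Equiv.Perm.mul_apply, hπC v hv, hfixC _ (hCG v hv), hfixC v hv, hCarc v hv]
        show (if G v = v then w v (G v) else 0) - (if G v = G v then w v (G v) else 0)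
          = -((if v = v then w v (G v) else 0) - (if G v = v then w v v else 0))
        rw [if_neg (hCne v hv), if_pos rfl, if_pos rfl, if_neg (hCne v hv)]
        ring
      rw [Finset.prod_congr rfl hCpart]
      have hneg : ∏ v ∈ C, -ent w t (σ v) v (g v)
          = (-1 : R) ^ C.card * ∏ v ∈ C, ent w t (σ v) v (g v) := by
        calc ∏ v ∈ C, -ent w t (σ v) v (g v)
            = ∏ v ∈ C, ((-1 : R) * ent w t (σ v) v (g v)) :=
              Finset.prod_congr rfl fun v _ => by ring
          _ = (∏ _v ∈ C, (-1 : R)) * ∏ v ∈ C, ent w t (σ v) v (g v) :=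
              Finset.prod_mul_distrib
          _ = (-1 : R) ^ C.card * ∏ v ∈ C, ent w t (σ v) v (g v) := by
              rw [Finset.prod_const]
      rw [hneg]
      have hcompl : ∀ v ∈ Cᶜ, ent w t ((σ * π) v) v (g v) = ent w t (σ v) v (g v) := by
        intro v hv
        rw [Equiv.Perm.mul_apply, hπnC v (Finset.mem_compl.1 hv)]
      rw [Finset.prod_congr rfl hcompl]
      ring
    have h2 : ((Equiv.Perm.sign (σ * π) : ℤ) : R)
        = ((Equiv.Perm.sign σ : ℤ) : R) * (-(-1 : R) ^ C.card) := by
      rw [Equiv.Perm.sign_mul, hsign]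
      push_cast
      ring
    have hpow : ((-1 : R) ^ C.card) * ((-1 : R) ^ C.card) = 1 := by
      rw [← mul_pow]
      norm_num
    rw [h1, h2]
    linear_combination (-(((Equiv.Perm.sign σ : ℤ) : R) * ∏ v : V, ent w t (σ v) v (g v))) * hpow
  -- now the involution
  rw [← Finset.sum_subset (Finset.subset_univ (AdmS g))
      (fun σ _ hσ => by rw [prod_ent_eq_zero w t hσ, mul_zero])]
  refine Finset.sum_involution
    (fun σ _ => if σ v₀ = v₀ then σ * π else σ * π⁻¹) ?_ ?_ ?_ ?_
  · intro σ hσ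
    by_cases hfix : σ v₀ = v₀
    · rw [if_pos hfix]
      refine hflip σ hσ ?_
      refine (hdich σ hσ).resolve_right ?_
      intro h
      exact hCne v₀ hv₀C (by rw [← h v₀ hv₀C, hfix])
    · rw [if_neg hfix]
      have hGC : ∀ x ∈ C, σ x = G x := (hdich σ hσ).resolve_left (fun h => hfix (h v₀ hv₀C))
      have hσ' : σ * π⁻¹ ∈ AdmS g := hmemπinv σ hσ hGC
      have h3 := hflip (σ * π⁻¹) hσ' (hfixC' σ hGC)
      rw [inv_mul_cancel_right] at h3
      rw [add_comm]
      exact h3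
  · intro σ hσ _
    by_cases hfix : σ v₀ = v₀
    · rw [if_pos hfix]
      intro h
      have hfC : ∀ x ∈ C, σ x = x := by
        refine (hdich σ hσ).resolve_right ?_
        intro hh
        exact hCne v₀ hv₀C (by rw [← hh v₀ hv₀C, hfix])
      have := DFunLike.congr_fun h v₀
      rw [Equiv.Perm.mul_apply, hπC v₀ hv₀C, hfC _ (hCG v₀ hv₀C), hfix] at this
      exact hCne v₀ hv₀C this
    · rw [if_neg hfix]
      intro h
      have hGC : ∀ x ∈ C, σ x = G x := (hdich σ hσ).resolve_left (fun hh => hfix (hh v₀ hv₀C))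
      have := DFunLike.congr_fun h v₀
      rw [hfixC' σ hGC v₀ hv₀C] at this
      exact hfix this.symm
  · intro σ hσ
    by_cases hfix : σ v₀ = v₀
    · rw [if_pos hfix]
      refine hmemπ σ hσ ?_
      refine (hdich σ hσ).resolve_right ?_
      intro h
      exact hCne v₀ hv₀C (by rw [← h v₀ hv₀C, hfix])
    · rw [if_neg hfix]
      have hGC : ∀ x ∈ C, σ x = G x := (hdich σ hσ).resolve_left (fun h => hfix (h v₀ hv₀C))
      exact hmemπinv σ hσ hGC
  · intro σ hσ
    by_cases hfix : σ v₀ = v₀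
    · have hfC : ∀ x ∈ C, σ x = x := by
        refine (hdich σ hσ).resolve_right ?_
        intro hh
        exact hCne v₀ hv₀C (by rw [← hh v₀ hv₀C, hfix])
      simp only [if_pos hfix]
      have hne2 : (σ * π) v₀ ≠ v₀ := by
        rw [Equiv.Perm.mul_apply, hπC v₀ hv₀C, hfC _ (hCG v₀ hv₀C)]
        exact hCne v₀ hv₀C
      rw [if_neg hne2, mul_inv_cancel_right]
    · have hGC : ∀ x ∈ C, σ x = G x := (hdich σ hσ).resolve_left (fun h => hfix (h v₀ hv₀C))
      simp only [if_neg hfix]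
      rw [if_pos (hfixC' σ hGC v₀ hv₀C), inv_mul_cancel_right]


theorem det_Mmat (w : V → V → R) (t : R) : (Mmat w t).det = fullSum w t := by
  rw [Matrix.det_apply']
  have hexp : ∀ σ : Equiv.Perm V, ∏ v : V, Mmat w t (σ v) v
      = ∑ g : V → Option V, ∏ v : V, ent w t (σ v) v (g v) := by
    intro σ
    calc ∏ v : V, Mmat w t (σ v) v = ∏ v : V, ∑ c : Option V, ent w t (σ v) v c :=
          Finset.prod_congr rfl fun v _ => (sum_ent w t (σ v) v).symm
      _ = ∑ g ∈ Fintype.piFinset (fun _ : V => (Finset.univ : Finset (Option V))),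
            ∏ v : V, ent w t (σ v) v (g v) := Finset.prod_univ_sum _ _
      _ = ∑ g : V → Option V, ∏ v : V, ent w t (σ v) v (g v) := by
          rw [Fintype.piFinset_univ]
  calc ∑ σ : Equiv.Perm V, ((Equiv.Perm.sign σ : ℤ) : R) * ∏ v : V, Mmat w t (σ v) v
      = ∑ σ : Equiv.Perm V, ∑ g : V → Option V,
          ((Equiv.Perm.sign σ : ℤ) : R) * ∏ v : V, ent w t (σ v) v (g v) := by
        refine Finset.sum_congr rfl fun σ _ => ?_
        rw [hexp σ, Finset.mul_sum]
    _ = ∑ g : V → Option V, ∑ σ : Equiv.Perm V,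
          ((Equiv.Perm.sign σ : ℤ) : R) * ∏ v : V, ent w t (σ v) v (g v) :=
        Finset.sum_comm
    _ = fullSum w t := by
        rw [fullSum, ← Finset.sum_filter_add_sum_filter_not Finset.univ
          (fun g : V → Option V => AcyclicFn g)]
        have h2 : ∑ g ∈ Finset.univ.filter (fun g : V → Option V => ¬ AcyclicFn g),
            ∑ σ : Equiv.Perm V, ((Equiv.Perm.sign σ : ℤ) : R) * ∏ v : V, ent w t (σ v) v (g v)
            = 0 := by
          refine Finset.sum_eq_zero fun g hgmem => ?_
          exact Tsum_cyclic w t (Finset.mem_filter.1 hgmem).2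
        rw [h2, add_zero]
        refine Finset.sum_congr rfl fun g hgmem => ?_
        exact Tsum_acyclic w t (Finset.mem_filter.1 hgmem).2


theorem fullSum_eq_forestEnum (A : V → V → Prop) (w : V → V → R) (t : R) :
    fullSum (fun u v => if A u v then w u v else 0) t = forestEnum A w t := by
  rw [forestEnum, fullSum]
  have hsub : Finset.univ.filter (fun f : V → Option V => IsRootedForest A f)
      ⊆ Finset.univ.filter (fun g : V → Option V => AcyclicFn g) := by
    intro f hf
    simp only [Finset.mem_filter, Finset.mem_univ, true_and] at hf ⊢
    exact hf.2
  rw [← Finset.sum_subset hsub]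
  · refine Finset.sum_congr rfl fun f hf => ?_
    have hf' : IsRootedForest A f := (Finset.mem_filter.1 hf).2
    refine Finset.prod_congr rfl fun v _ => ?_
    cases hfv : f v with
    | none => rfl
    | some z => simp [hf'.1 v z hfv]
  · intro f hf hnotf
    simp only [Finset.mem_filter, Finset.mem_univ, true_and] at hf hnotf
    have hex : ∃ v z, f v = some z ∧ ¬ A v z := by
      by_contra h
      push_neg at h
      exact hnotf ⟨fun v z hvz => h v z hvz, hf⟩
    obtain ⟨v, z, hvz, hAz⟩ := hex
    apply Finset.prod_eq_zero (Finset.mem_univ v)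
    rw [hvz]
    simp [hAz]

theorem forestEnum_eq_det (A : V → V → Prop) (w : V → V → R) (t : R) :
    forestEnum A w t = (Mmat (fun u v => if A u v then w u v else 0) t).det := by
  rw [det_Mmat]
  exact (fullSum_eq_forestEnum A w t).symm

end K2Aux


/-- For a loopless weighted digraph `G` (arc relation `A`, weights `w`), the
rooted-forest enumerator of the Cartesian product `G × K₂` — where vertical arcs
into the copy `ε` have weight `x_ε` and horizontal arcs keep their weight —
satisfies `F_{G×K₂}(t) = F_G(t) · F_G(t + x₀ + x₁)`. -/
theorem cartesian_product_K2_forest_enumerator {R : Type*} [CommRing R]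
    {U : Type*} [Fintype U] (A : U → U → Prop) (hA : ∀ u : U, ¬ A u u)
    (w : U → U → R) (x0 x1 t : R) :
    forestEnum
      (fun p q : U × Bool => (A p.1 q.1 ∧ p.2 = q.2) ∨ (p.1 = q.1 ∧ p.2 ≠ q.2))
      (fun p q => if p.1 = q.1 then (if q.2 then x1 else x0)
                  else if p.2 = q.2 then w p.1 q.1 else 0) t
    = forestEnum A w t * forestEnum A w (t + x0 + x1) := by
  rw [K2Aux.forestEnum_eq_det, K2Aux.forestEnum_eq_det, K2Aux.forestEnum_eq_det]
  set w' : U → U → R := fun u v => if A u v then w u v else 0 with hw'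
  set wH : U × Bool → U × Bool → R := fun a b =>
    @ite R ((A a.1 b.1 ∧ a.2 = b.2) ∨ (a.1 = b.1 ∧ a.2 ≠ b.2)) (Classical.propDecidable _)
      (if a.1 = b.1 then (if b.2 then x1 else x0) else if a.2 = b.2 then w a.1 b.1 else 0)
      0 with hwH
  -- entry computations for the product weight
  have hsame : ∀ (v u : U) (δ : Bool), wH (v, δ) (u, δ) = w' v u := by
    intro v u δ
    by_cases hvu : v = u
    · subst hvu
      simp [hwH, hw', hA v]
    · by_cases hAvu : A v u
      · simp [hwH, hw', hvu, hAvu]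
      · simp [hwH, hw', hvu, hAvu]
  have hdiff : ∀ (v u : U) (δ : Bool), wH (v, δ) (u, !δ)
      = if v = u then (if δ then x0 else x1) else 0 := by
    intro v u δ
    by_cases hvu : v = u
    · subst hvu
      cases δ <;> simp [hwH, hA v]
    · cases δ <;> simp [hwH, hvu]
  have hrowsum : ∀ (v : U) (δ : Bool), ∑ q : U × Bool, wH (v, δ) q
      = (∑ z : U, w' v z) + (if δ then x0 else x1) := by
    intro v δ
    rw [Fintype.sum_prod_type]
    have hz : ∀ z : U, ∑ γ : Bool, wH (v, δ) (z, γ)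
        = w' v z + (if z = v then (if δ then x0 else x1) else 0) := by
      intro z
      rw [Fintype.sum_bool]
      cases δ
      · have h1 := hsame v z false
        have h2 := hdiff v z false
        simp only [Bool.not_false] at h2
        rw [h1, h2]
        by_cases hvz : v = z
        · subst hvz
          simp
          try ring
        · simp [hvz, Ne.symm hvz]
          try ring
      · have h1 := hsame v z true
        have h2 := hdiff v z true
        simp only [Bool.not_true] at h2
        rw [h1, h2]
        by_cases hvz : v = z
        · subst hvz
          simp
          try ring
        · simp [hvz, Ne.symm hvz]
          try ring
    rw [Finset.sum_congr rfl (fun z _ => hz z), Finset.sum_add_distrib,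
      Finset.sum_ite_eq' Finset.univ v (fun _ => if δ then x0 else x1)]
    simp
  -- the reindexing equivalence
  let e : (U ⊕ U) ≃ U × Bool :=
    { toFun := Sum.elim (fun u => (u, false)) (fun u => (u, true))
      invFun := fun p => if p.2 then Sum.inr p.1 else Sum.inl p.1
      left_inv := by rintro (u | u) <;> simp
      right_inv := by rintro ⟨u, _ | _⟩ <;> simp }
  have hblock : (K2Aux.Mmat wH t).submatrix ⇑e ⇑e
      = Matrix.fromBlocks (K2Aux.Mmat w' t + x1 • 1) (-(x0 • (1 : Matrix U U R)))
          (-(x1 • (1 : Matrix U U R))) (K2Aux.Mmat w' t + x0 • 1) := by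
    ext i j
    cases i with
    | inl u =>
      cases j with
      | inl v =>
        show K2Aux.Mmat wH t (u, false) (v, false) = _
        simp only [K2Aux.Mmat, Matrix.of_apply, Matrix.fromBlocks_apply₁₁, Matrix.add_apply,
          Matrix.smul_apply, Matrix.one_apply, smul_eq_mul]
        rw [hrowsum v false, hsame v u false]
        by_cases huv : u = v
        · subst huv
          simp
          try ring
        · simp [huv]
          try ring
      | inr v =>
        show K2Aux.Mmat wH t (u, false) (v, true) = _
        simp only [K2Aux.Mmat, Matrix.of_apply, Matrix.fromBlocks_apply₁₂, Matrix.neg_apply,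
          Matrix.smul_apply, Matrix.one_apply, smul_eq_mul]
        have h2 := hdiff v u true
        simp only [Bool.not_true] at h2
        rw [h2]
        by_cases huv : u = v
        · subst huv
          simp
          try ring
        · simp [huv, Ne.symm huv]
          try ring
    | inr u =>
      cases j with
      | inl v =>
        show K2Aux.Mmat wH t (u, true) (v, false) = _
        simp only [K2Aux.Mmat, Matrix.of_apply, Matrix.fromBlocks_apply₂₁, Matrix.neg_apply,
          Matrix.smul_apply, Matrix.one_apply, smul_eq_mul]
        have h2 := hdiff v u false
        simp only [Bool.not_false] at h2
        rw [h2]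
        by_cases huv : u = v
        · subst huv
          simp
          try ring
        · simp [huv, Ne.symm huv]
          try ring
      | inr v =>
        show K2Aux.Mmat wH t (u, true) (v, true) = _
        simp only [K2Aux.Mmat, Matrix.of_apply, Matrix.fromBlocks_apply₂₂, Matrix.add_apply,
          Matrix.smul_apply, Matrix.one_apply, smul_eq_mul]
        rw [hrowsum v true, hsame v u true]
        by_cases huv : u = v
        · subst huv
          simp
          try ring
        · simp [huv]
          try ring
  have hdet0 : (K2Aux.Mmat wH t).det
      = (Matrix.fromBlocks (K2Aux.Mmat w' t + x1 • 1) (-(x0 • (1 : Matrix U U R)))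
          (-(x1 • (1 : Matrix U U R))) (K2Aux.Mmat w' t + x0 • 1)).det := by
    rw [← hblock, Matrix.det_submatrix_equiv_self]
  have hmul : (Matrix.fromBlocks 1 1 0 1 : Matrix (U ⊕ U) (U ⊕ U) R)
      * Matrix.fromBlocks (K2Aux.Mmat w' t + x1 • 1) (-(x0 • (1 : Matrix U U R)))
          (-(x1 • (1 : Matrix U U R))) (K2Aux.Mmat w' t + x0 • 1)
      * (Matrix.fromBlocks 1 (-1) 0 1 : Matrix (U ⊕ U) (U ⊕ U) R)
      = Matrix.fromBlocks (K2Aux.Mmat w' t) 0 (-(x1 • (1 : Matrix U U R)))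
          (K2Aux.Mmat w' t + (x0 + x1) • 1) := by
    rw [Matrix.fromBlocks_multiply, Matrix.fromBlocks_multiply]
    rw [Matrix.fromBlocks_inj]
    refine ⟨?_, ?_, ?_, ?_⟩
    · simp only [Matrix.one_mul, Matrix.mul_one, Matrix.mul_zero, add_zero]
      abel
    · simp only [Matrix.one_mul, Matrix.mul_one, Matrix.mul_neg]
      abel
    · simp only [Matrix.zero_mul, Matrix.one_mul, Matrix.mul_one, Matrix.mul_zero,
        zero_add, add_zero]
    · simp only [Matrix.zero_mul, Matrix.one_mul, Matrix.mul_one, Matrix.mul_neg,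
        zero_add, add_zero, neg_neg, add_smul]
      abel
  have hdetE₁ : (Matrix.fromBlocks 1 1 0 1 : Matrix (U ⊕ U) (U ⊕ U) R).det = 1 := by
    rw [Matrix.det_fromBlocks_zero₂₁, Matrix.det_one, mul_one]
  have hdetE₂ : (Matrix.fromBlocks 1 (-1) 0 1 : Matrix (U ⊕ U) (U ⊕ U) R).det = 1 := by
    rw [Matrix.det_fromBlocks_zero₂₁, Matrix.det_one, mul_one]
  have hdet1 : (Matrix.fromBlocks (K2Aux.Mmat w' t + x1 • 1) (-(x0 • (1 : Matrix U U R)))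
      (-(x1 • (1 : Matrix U U R))) (K2Aux.Mmat w' t + x0 • 1)).det
      = (K2Aux.Mmat w' t).det * (K2Aux.Mmat w' t + (x0 + x1) • 1).det := by
    have h := congrArg Matrix.det hmul
    rw [Matrix.det_mul, Matrix.det_mul, hdetE₁, hdetE₂, one_mul, mul_one] at h
    rw [h, Matrix.det_fromBlocks_zero₁₂]
  have hXs : K2Aux.Mmat w' (t + x0 + x1) = K2Aux.Mmat w' t + (x0 + x1) • 1 := by
    ext u v
    simp only [K2Aux.Mmat, Matrix.of_apply, Matrix.add_apply, Matrix.smul_apply,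
      Matrix.one_apply, smul_eq_mul]
    by_cases huv : u = v
    · subst huv
      simp
      try ring
    · simp [huv]
      try ring
  have goal' : (K2Aux.Mmat wH t).det
      = (K2Aux.Mmat w' t).det * (K2Aux.Mmat w' (t + x0 + x1)).det := by
    rw [hdet0, hdet1, hXs]
  convert goal' using 2
end AuxMF
end

section
/- Let H = G ⊠ K_2 with vertical arcs of spin ε weighted x_ε, straight a-arcs weighted w_a, and diagonal a-arcs weighted w'_a. Then the forest enumerator satisfies F_H(t; x_0, x_1) = F_H(t; x_0 + x_1, 0). -/
open scoped Classical
open Polynomial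

/-- Arc relation of the strong product `G ⊠ K₂` of a loopless digraph with arc
relation `A`: straight and diagonal arcs over the arcs of `G`, plus vertical arcs. -/
def strongArc {U : Type*} (A : U → U → Prop) (p q : U × Bool) : Prop :=
  A p.1 q.1 ∨ (p.1 = q.1 ∧ p.2 ≠ q.2)

/-- Weights on `G ⊠ K₂`: vertical arcs of spin `ε` weigh `x_ε` (the spin of a
vertical arc is the second coordinate of its target), straight `a`-arcs weigh
`w a`, diagonal `a`-arcs weigh `w' a`. -/
noncomputable def strongWeight {R : Type*} [CommRing R] {U : Type*}
    (w w' : U → U → R) (x0 x1 : R) (p q : U × Bool) : R :=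
  if p.1 = q.1 then (if p.2 = q.2 then 0 else (if q.2 then x1 else x0))
  else (if p.2 = q.2 then w p.1 q.1 else w' p.1 q.1)

/-!
By the matrix-forest theorem, `F_H` is the determinant of the Laplacian `t I + D - W` of `H`:
expanding row `p` as `t e_p + ∑_q W p q (e_p - e_q)` multilinearly, the term of a successor
choice `f` carries the factor `det (1 - succMatrix f)`, which is `1` if `f` is acyclic and `0`
otherwise.
Cut it into `2 × 2` blocks `a b; c d` along the fibers `U × {0}` and `U × {1}`. Summed over
each fiber `{v} × {0, 1}`, a row of the Laplacian does not depend on the spin of its vertex,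
which is `a + b = c + d`; subtracting the second block row from the first and then adding the first
block column to the second yields `det = det (a - c) * det (c + d)`. The vertical weights enter
`a - c` only through `x₀ + x₁`, and `c + d` not at all.
-/

open Finset Matrix

section ForestMatrix

variable {V : Type*} {R : Type*} [CommRing R]

noncomputable def succMatrix (f : V → Option V) : Matrix V V R :=
  of fun p q => if f p = some q then 1 else 0

noncomputable def arcWeight (A : V → V → Prop) (wgt : V → V → R) : Matrix V V R :=
  of fun p q => if A p q then wgt p q else 0

variable [DecidableEq V]

theorem one_sub_succMatrix_eq (f : V → Option V) :
    (1 - succMatrix f : Matrix V V R) =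
      of fun p => Pi.single p 1 - (f p).elim 0 (Pi.single · 1) := by
  ext p q
  cases h : f p <;> simp [succMatrix, one_apply, Pi.single_apply, h, eq_comm]

variable [Fintype V]

theorem succMatrix_mulVec (f : V → Option V) (c : V → R) (p : V) :
    (succMatrix f *ᵥ c) p = (f p).elim 0 c := by
  cases h : f p <;> simp [succMatrix, mulVec, dotProduct, h]

theorem det_one_sub_succMatrix_of_acyclic {f : V → Option V}
    (hf : ∀ v, ¬ Relation.TransGen (fun a b => f a = some b) v v) :
    (1 - succMatrix f : Matrix V V R).det = 1 := by
  let r := Relation.TransGen (fun a b : V => f a = some b)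
  have : IsTrans V r := ⟨fun _ _ _ => Relation.TransGen.trans⟩
  have : Std.Irrefl r := ⟨hf⟩
  have : IsWellFounded V r := ⟨Finite.wellFounded_of_trans_of_irrefl r⟩
  have hsucc : ∀ p q, IsWellFounded.rank r q ≤ IsWellFounded.rank r p →
      (succMatrix f : Matrix V V R) p q = 0 := fun p q hqp => if_neg fun h =>
    (IsWellFounded.rank_lt_of_rel (Relation.TransGen.single h)).not_ge hqp
  have hT : (1 - succMatrix f : Matrix V V R).BlockTriangular (IsWellFounded.rank r) :=
    fun p q hqp => by rw [Matrix.sub_apply, one_apply_ne (by rintro rfl; exact hqp.false),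
      hsucc p q hqp.le, sub_zero]
  rw [hT.det]
  refine prod_eq_one fun a _ => ?_
  convert det_one (n := {p // IsWellFounded.rank r p = a}) (R := R)
  ext ⟨p, hp⟩ ⟨q, hq⟩
  rw [toSquareBlock_def, of_apply, Matrix.sub_apply, hsucc p q (hq.trans hp.symm).le, sub_zero]
  simp [one_apply]

theorem det_one_sub_succMatrix_of_cycle {f : V → Option V} {v : V}
    (hv : Relation.TransGen (fun a b => f a = some b) v v) :
    (1 - succMatrix f : Matrix V V R).det = 0 := by
  -- the indicator of the vertices from which `v` is reachable is a kernel vector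
  let c : V → R := fun p => if Relation.TransGen (fun a b => f a = some b) p v then 1 else 0
  have hc : (1 - succMatrix f : Matrix V V R) *ᵥ c = 0 := by
    ext p
    rw [sub_mulVec, one_mulVec, Pi.sub_apply, succMatrix_mulVec, Pi.zero_apply, sub_eq_zero]
    cases hp : f p with
    | none => simp [c, Relation.TransGen.head'_iff, hp]
    | some q =>
      have hpq : Relation.TransGen (fun a b => f a = some b) p v ↔
          Relation.TransGen (fun a b => f a = some b) q v := by
        refine ⟨fun h => ?_, Relation.TransGen.head hp⟩
        obtain ⟨q', hpq', hq'v⟩ := Relation.TransGen.head'_iff.1 h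
        obtain rfl : q = q' := Option.some_inj.1 (hp.symm.trans hpq')
        rcases Relation.reflTransGen_iff_eq_or_transGen.1 hq'v with rfl | h
        exacts [hv, h]
      simp only [c, Option.elim_some, hpq]
  have hcol : (fun k => ∑ i, c i • (1 - succMatrix f : Matrix V V R) k i) = 0 := by
    rw [← hc]; ext k; simp [mulVec, dotProduct, mul_comm]
  have h := det_updateCol_sum (1 - succMatrix f : Matrix V V R) v c
  rwa [hcol, det_eq_zero_of_column_eq_zero v (by simp), eq_comm, show c v = 1 from if_pos hv,
    one_smul] at h

theorem det_of_sum_smul {ι : Type*} [Fintype ι] (c : V → ι → R)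
    (row : V → ι → V → R) :
    (of fun p => ∑ i, c p i • row p i).det =
      ∑ r : V → ι, (∏ p, c p (r p)) * (of fun p => row p (r p)).det := by
  have h := (detRowAlternating (n := V) (R := R)).toMultilinearMap.map_sum
    fun p i => c p i • row p i
  simp only [MultilinearMap.map_smul_univ, smul_eq_mul] at h
  exact h

noncomputable def forestLaplacian (A : V → V → Prop) (wgt : V → V → R) (t : R) :
    Matrix V V R :=
  t • 1 + diagonal (fun p => ∑ q, arcWeight A wgt p q) - arcWeight A wgt

theorem forestLaplacian_apply (A : V → V → Prop) (wgt : V → V → R) (t : R) (p q : V) :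
    forestLaplacian A wgt t p q =
      (if p = q then t + ∑ r, arcWeight A wgt p r else 0) - arcWeight A wgt p q := by
  simp [forestLaplacian, one_apply, diagonal_apply, ite_add_ite]

theorem forestLaplacian_eq (A : V → V → Prop) (wgt : V → V → R) (t : R) :
    forestLaplacian A wgt t = of fun p => ∑ o : Option V,
      o.elim t (arcWeight A wgt p) • (Pi.single p 1 - o.elim 0 (Pi.single · 1)) := by
  ext p q
  rw [of_apply, Fintype.sum_option]
  simp only [forestLaplacian, Matrix.sub_apply, Matrix.add_apply, Matrix.smul_apply, one_apply,
    smul_eq_mul, mul_ite, mul_one, mul_zero, diagonal_apply, Option.elim_none, sub_zero,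
    Option.elim_some, Pi.add_apply, Pi.smul_apply, Pi.single_apply, eq_comm, Finset.sum_apply,
    Pi.sub_apply, mul_sub, sum_sub_distrib, sum_ite_irrel, sum_const_zero, sum_ite_eq, mem_univ,
    ↓reduceIte]
  ring

theorem prod_arcWeight_mul_det_one_sub_succMatrix (A : V → V → Prop) (wgt : V → V → R)
    (t : R) (f : V → Option V) :
    (∏ p, (f p).elim t (arcWeight A wgt p)) * (1 - succMatrix f : Matrix V V R).det =
      if IsRootedForest A f then ∏ p, (f p).elim t (wgt p) else 0 := by
  by_cases hcyc : ∃ v, Relation.TransGen (fun a b => f a = some b) v v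
  · obtain ⟨v, hv⟩ := hcyc
    rw [det_one_sub_succMatrix_of_cycle hv, mul_zero, if_neg fun hf => hf.2 v hv]
  push Not at hcyc
  rw [det_one_sub_succMatrix_of_acyclic hcyc, mul_one]
  by_cases harc : ∀ v w, f v = some w → A v w
  · rw [if_pos ⟨harc, hcyc⟩]
    refine prod_congr rfl fun p _ => ?_
    cases h : f p with
    | none => rfl
    | some q => exact if_pos (harc p q h)
  · push Not at harc
    obtain ⟨p, q, hpq, hA⟩ := harc
    rw [if_neg fun hf => hA (hf.1 p q hpq)]
    exact prod_eq_zero (mem_univ p) (by simp [hpq, arcWeight, hA])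

theorem det_forestLaplacian (A : V → V → Prop) (wgt : V → V → R) (t : R) :
    (forestLaplacian A wgt t).det = forestEnum A wgt t := by
  rw [forestLaplacian_eq, det_of_sum_smul, forestEnum, sum_filter]
  simp_rw [← one_sub_succMatrix_eq, prod_arcWeight_mul_det_one_sub_succMatrix]
  congr!

end ForestMatrix

section StrongProduct

variable {R : Type*} [CommRing R]

theorem det_fromBlocks_of_add_eq {n : Type*} [Fintype n] [DecidableEq n] (a b c d : Matrix n n R)
    (h : a + b = c + d) : (fromBlocks a b c d).det = (a - c).det * (c + d).det := by
  have hconj : fromBlocks 1 (-1) 0 1 * fromBlocks a b c d * fromBlocks 1 1 0 1 =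
      fromBlocks (a - c) 0 c (c + d) := by
    simp only [fromBlocks_multiply, Matrix.one_mul, Matrix.neg_mul, Matrix.zero_mul,
      Matrix.mul_one, Matrix.mul_zero, zero_add, add_zero, ← sub_eq_add_neg]
    rw [sub_add_sub_comm, h, sub_self]
  have hunit : ∀ x : Matrix n n R, (fromBlocks 1 x 0 1).det = 1 := fun x => by
    rw [det_fromBlocks_zero₂₁, det_one, one_mul]
  rw [← det_fromBlocks_zero₁₂, ← hconj, det_mul, det_mul, hunit, hunit, one_mul, mul_one]

variable {U : Type*}

def fiberBlock (M : Matrix (U × Bool) (U × Bool) R) (ε δ : Bool) : Matrix U U R :=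
  of fun u v => M (u, ε) (v, δ)

variable [DecidableEq U]

variable (A : U → U → Prop) (w w' : U → U → R)

theorem arcWeight_strongArc (x0 x1 : R) (u v : U) (ε δ : Bool) :
    arcWeight (strongArc A) (strongWeight w w' x0 x1) (u, ε) (v, δ) =
      if u = v then (if ε = δ then 0 else if δ then x1 else x0)
      else if A u v then (if ε = δ then w u v else w' u v) else 0 := by
  by_cases huv : u = v
  · subst huv
    cases ε <;> cases δ <;> simp [arcWeight, strongArc, strongWeight]
  · by_cases ha : A u v <;> simp [arcWeight, strongArc, strongWeight, huv, ha]

variable [Fintype U]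

theorem det_eq_det_fromBlocks_fiberBlock (M : Matrix (U × Bool) (U × Bool) R) :
    M.det = (fromBlocks (fiberBlock M false false) (fiberBlock M false true)
      (fiberBlock M true false) (fiberBlock M true true)).det := by
  rw [← det_reindex_self ((Equiv.prodComm U Bool).trans (Equiv.boolProdEquivSum U)) M]
  congr 1
  ext (i | i) (j | j) <;> rfl

theorem sum_arcWeight_strongArc (x0 x1 : R) (u : U) (ε : Bool) :
    ∑ q, arcWeight (strongArc A) (strongWeight w w' x0 x1) (u, ε) q =
      (if ε then x0 else x1) + ∑ v ∈ univ.erase u, if A u v then w u v + w' u v else 0 := by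
  rw [Fintype.sum_prod_type, ← add_sum_erase _ _ (mem_univ u)]
  congr 1
  · cases ε <;> simp [arcWeight_strongArc]
  · refine sum_congr rfl fun v hv => ?_
    have huv : u ≠ v := (ne_of_mem_erase hv).symm
    cases ε <;> by_cases ha : A u v <;> simp [arcWeight_strongArc, huv, ha, add_comm]

theorem fiberBlock_forestLaplacian_strongArc_add (t x0 x1 y0 y1 : R) (ε δ : Bool) :
    fiberBlock (forestLaplacian (strongArc A) (strongWeight w w' x0 x1) t) ε false +
        fiberBlock (forestLaplacian (strongArc A) (strongWeight w w' x0 x1) t) ε true =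
      fiberBlock (forestLaplacian (strongArc A) (strongWeight w w' y0 y1) t) δ false +
        fiberBlock (forestLaplacian (strongArc A) (strongWeight w w' y0 y1) t) δ true := by
  ext u v
  simp only [Matrix.add_apply, fiberBlock, of_apply, forestLaplacian_apply,
    sum_arcWeight_strongArc, arcWeight_strongArc, Prod.mk.injEq]
  by_cases huv : u = v <;> cases ε <;> cases δ <;> simp [huv] <;> ring

theorem fiberBlock_forestLaplacian_strongArc_sub (t x0 x1 : R) :
    fiberBlock (forestLaplacian (strongArc A) (strongWeight w w' x0 x1) t) false false -
        fiberBlock (forestLaplacian (strongArc A) (strongWeight w w' x0 x1) t) true false =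
      fiberBlock (forestLaplacian (strongArc A) (strongWeight w w' (x0 + x1) 0) t) false false -
        fiberBlock (forestLaplacian (strongArc A) (strongWeight w w' (x0 + x1) 0) t)
          true false := by
  ext u v
  simp only [Matrix.sub_apply, fiberBlock, of_apply, forestLaplacian_apply,
    sum_arcWeight_strongArc, arcWeight_strongArc, Prod.mk.injEq]
  by_cases huv : u = v
  · simp [huv]
    ring
  · simp [huv]

end StrongProduct

theorem strong_product_spin_weight_transfer_general {R : Type*} [CommRing R]
    {U : Type*} [Fintype U] (A : U → U → Prop)
    (w w' : U → U → R) (x0 x1 t : R) :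
    forestEnum (strongArc A) (strongWeight w w' x0 x1) t =
      forestEnum (strongArc A) (strongWeight w w' (x0 + x1) 0) t := by
  have hadd := fiberBlock_forestLaplacian_strongArc_add A w w' t
  rw [← det_forestLaplacian, ← det_forestLaplacian, det_eq_det_fromBlocks_fiberBlock,
    det_eq_det_fromBlocks_fiberBlock, det_fromBlocks_of_add_eq _ _ _ _ (hadd _ _ _ _ _ _),
    det_fromBlocks_of_add_eq _ _ _ _ (hadd _ _ _ _ _ _), fiberBlock_forestLaplacian_strongArc_sub,
    hadd x0 x1 (x0 + x1) 0 true true]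

/-- The forest enumerator of `H = G ⊠ K₂` depends on the vertical-arc weights
`x₀, x₁` only through their sum: `F_H(t; x₀, x₁) = F_H(t; x₀ + x₁, 0)`. -/
theorem strong_product_spin_weight_transfer {R : Type*} [CommRing R]
    {U : Type*} [Fintype U] (A : U → U → Prop) (hA : ∀ u : U, ¬ A u u)
    (w w' : U → U → R) (x0 x1 t : R) :
    forestEnum (strongArc A) (strongWeight w w' x0 x1) t =
      forestEnum (strongArc A) (strongWeight w w' (x0 + x1) 0) t :=
  strong_product_spin_weight_transfer_general A w w' x0 x1 t
end

section
/- Let M be a p×p matrix with eigenvalues λ_1,…,λ_p (with multiplicity, over an algebraically closed field) and N a q×q matrix with eigenvalues μ_1,…,μ_q. Then the eigenvalues of M ⊗ I_q + I_p ⊗ N (Kronecker sum) are exactly λ_i + μ_j for i ∈ [p], j ∈ [q], with multiplicity; equivalently, det(M ⊗ I_q + I_p ⊗ N + t·I_{pq}) = ∏_{i,j} (t + λ_i + μ_j). -/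
/-!
Viewed as a `p × p` block matrix, `M ⊗ I + I ⊗ N` has its blocks `M i j • I + δ i j • N` in the
commutative ring `K[N]`, so by Silvester's theorem on determinants of block matrices with commuting
blocks its determinant is `det (χ(N))`, where `χ = det (X • I + M) = ∏ i, (X + λ i)`. This
factors as `∏ i, det (N + λ i • I) = ∏ i, ∏ j, (λ i + μ j)`; the shift by `t` is absorbed into `M`.
-/

open scoped Kronecker

open Polynomial

namespace Matrix

variable {R : Type*} [CommRing R] {m n : Type*} [Fintype m] [Fintype n] [DecidableEq m]
  [DecidableEq n]

theorem det_kronecker_one_add_one_kronecker (A : Matrix m m R) (B : Matrix n n R) :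
    (A ⊗ₖ (1 : Matrix n n R) + (1 : Matrix m m R) ⊗ₖ B).det = (aeval B (-A).charpoly).det := by
  rw [charpoly, ← AlgHom.coe_toRingHom, det_det]
  congr 1
  ext ⟨i, k⟩ ⟨j, l⟩
  obtain rfl | hij := eq_or_ne i j
  · simp [one_apply, algebraMap_eq_diagonal, diagonal_apply, add_comm]
  · simp [one_apply, algebraMap_eq_diagonal, diagonal_apply, hij]

theorem det_kronecker_one_add_one_kronecker_of_charpoly_neg_eq_prod (A : Matrix m m R)
    (B : Matrix n n R) (lam : m → R) (hA : (-A).charpoly = ∏ i, (X + C (lam i))) :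
    (A ⊗ₖ (1 : Matrix n n R) + (1 : Matrix m m R) ⊗ₖ B).det = ∏ i, (B + lam i • 1).det := by
  rw [det_kronecker_one_add_one_kronecker, hA]
  exact (map_prod (detMonoidHom.comp (aeval B : R[X] →ₐ[R] Matrix n n R).toMonoidHom) _ _).trans
    (by simp [Algebra.algebraMap_eq_smul_one])

end Matrix

theorem Matrix.charpoly_neg_eq_prod_of_det_add_smul_one {K : Type*} [Field K] [Infinite K]
    {m : Type*} [Fintype m] [DecidableEq m] (A : Matrix m m K) (lam : m → K)
    (hA : ∀ t : K, (A + t • 1).det = ∏ i, (t + lam i)) :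
    (-A).charpoly = ∏ i, (X + C (lam i)) := by
  refine Polynomial.funext fun t => ?_
  rw [eval_charpoly, eval_prod, sub_neg_eq_add, scalar_apply, add_comm, ← smul_one_eq_diagonal, hA]
  simp

/-- Kronecker sum of eigenvalues: if `M` has eigenvalues `λ_i` (with multiplicity,
over an algebraically closed field), i.e. `det(M + tI) = ∏ᵢ (t + λᵢ)`, and `N` has
eigenvalues `μ_j`, then `M ⊗ I + I ⊗ N` has eigenvalues `λ_i + μ_j`, i.e.
`det(M ⊗ I + I ⊗ N + tI) = ∏_{i,j} (t + λᵢ + μⱼ)`. -/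
theorem kronecker_sum_eigenvalues {K : Type*} [Field K] [IsAlgClosed K]
    (p q : ℕ) (M : Matrix (Fin p) (Fin p) K) (N : Matrix (Fin q) (Fin q) K)
    (lam : Fin p → K) (mu : Fin q → K)
    (hM : ∀ t : K, (M + t • 1).det = ∏ i : Fin p, (t + lam i))
    (hN : ∀ t : K, (N + t • 1).det = ∏ j : Fin q, (t + mu j)) :
    ∀ t : K,
      (M ⊗ₖ (1 : Matrix (Fin q) (Fin q) K) +
        (1 : Matrix (Fin p) (Fin p) K) ⊗ₖ N + t • 1).det =
      ∏ i : Fin p, ∏ j : Fin q, (t + lam i + mu j) := by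
  intro t
  have hshift : M ⊗ₖ (1 : Matrix (Fin q) (Fin q) K) + (1 : Matrix (Fin p) (Fin p) K) ⊗ₖ N + t • 1
      = (M + t • 1) ⊗ₖ 1 + 1 ⊗ₖ N := by
    rw [Matrix.add_kronecker, Matrix.smul_kronecker, Matrix.one_kronecker_one, add_right_comm]
  have hMt : ∀ s : K, (M + t • 1 + s • 1).det = ∏ i, (s + (t + lam i)) := fun s => by
    rw [add_assoc, ← add_smul, hM]
    exact Finset.prod_congr rfl fun i _ => by ring
  rw [hshift, Matrix.det_kronecker_one_add_one_kronecker_of_charpoly_neg_eq_prod _ _ _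
    (Matrix.charpoly_neg_eq_prod_of_det_add_smul_one _ _ hMt)]
  exact Finset.prod_congr rfl fun i _ => hN (t + lam i)
end

section
/- For any weighted digraph G on vertex set [n] with arc weights w_{i,j}, the forest enumerator satisfies ∑_F t^(k(F)) ∏_{(i,j)∈F} w_{i,j} = det(L(G) + t·I_n), where the sum is over rooted spanning forests F and L(G) is the Laplacian matrix with off-diagonal entries −w_{i,j} and diagonal entries ∑_k w_{i,k}. -/
open scoped Classical
open Polynomial

/-!
Row `v` of `L + t • 1` is `t • e v + ∑ u, w v u • (e v - e u)`: one summand for each way of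
letting `v` be a root or giving it an out-arc. Expanding the determinant multilinearly over all
such choices `f : V → Option V` gives `∑ f, (∏ v, (f v).elim t (w v)) * det E`, where row `v`
of `E = forestMatrix f` is `e v - e u` if `f v = some u` and `e v` if `f v = none`. If `f` has a
cycle, the rows of `E` along its cycles sum to zero, so `det E = 0`. Otherwise, ordering the
vertices by the number of vertices reachable from them makes `E` unitriangular, so `det E = 1`.
-/

open Finset Matrix Relation

theorem Matrix.det_of_sum_smul_rows {ι κ R : Type*} [Fintype ι] [DecidableEq ι] [Fintype κ]
    [DecidableEq κ] [CommRing R] (a : ι → κ → R) (b : ι → κ → ι → R) :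
    (of fun i => ∑ c, a i c • b i c).det =
      ∑ g : ι → κ, (∏ i, a i (g i)) * (of fun i => b i (g i)).det := by
  change detRowAlternating (fun i => ∑ c, a i c • b i c) = _
  simp only [← AlternatingMap.coe_multilinearMap, MultilinearMap.map_sum,
    MultilinearMap.map_smul_univ, smul_eq_mul]
  rfl

section Cycles

variable {V : Type*} (f : V → Option V)

theorem exists_succ_of_transGen_self {v : V} (hv : TransGen (fun a b => f a = some b) v v) :
    ∃ w, f v = some w ∧ TransGen (fun a b => f a = some b) w w := by
  obtain ⟨w, hvw, hwv⟩ := TransGen.head'_iff.mp hv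
  exact ⟨w, hvw, TransGen.tail' hwv hvw⟩

theorem exists_pred_of_transGen_self {v : V} (hv : TransGen (fun a b => f a = some b) v v) :
    ∃ p, f p = some v ∧ TransGen (fun a b => f a = some b) p p := by
  obtain ⟨p, hvp, hpv⟩ := TransGen.tail'_iff.mp hv
  exact ⟨p, hpv, TransGen.head' hpv hvp⟩

theorem isRootedForest_ne_iff :
    IsRootedForest (· ≠ ·) f ↔ ∀ v, ¬ TransGen (fun a b => f a = some b) v v :=
  ⟨And.right, fun h => ⟨by rintro v _ hvv rfl; exact h v (.single hvv), h⟩⟩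

end Cycles

section ForestMatrix

variable {V R : Type*} [DecidableEq V] [CommRing R]

def forestMatrix (f : V → Option V) : Matrix V V R :=
  of fun v u => (if v = u then 1 else 0) - if f v = some u then 1 else 0

theorem forestMatrix_apply_of_ne_some {f : V → Option V} {v u : V} (h : f v ≠ some u) :
    forestMatrix (R := R) f v u = if v = u then 1 else 0 := by
  simp [forestMatrix, h]

variable [Fintype V]

theorem det_forestMatrix_of_transGen_self {f : V → Option V} {v : V}
    (hv : TransGen (fun a b => f a = some b) v v) : (forestMatrix (R := R) f).det = 0 := by
  set S := univ.filter fun u => TransGen (fun a b => f a = some b) u u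
  set succ : V → V := fun u => (f u).getD u
  have hsucc : ∀ u ∈ S, f u = some (succ u) ∧ succ u ∈ S := by
    intro u hu
    obtain ⟨w, huw, hw⟩ := exists_succ_of_transGen_self f (mem_filter.mp hu).2
    simp [succ, S, huw, hw]
  have hmaps : Set.MapsTo succ S S := fun u hu => (hsucc u hu).2
  have hsurj : Set.SurjOn succ S S := fun u hu => by
    obtain ⟨p, hpu, hp⟩ := exists_pred_of_transGen_self f (mem_filter.mp hu).2
    exact ⟨p, by simp [S, hp], by simp [succ, hpu]⟩
  have hinj := injOn_of_surjOn_of_card_le succ hmaps hsurj le_rfl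
  have hrows : (forestMatrix (R := R) f)ᵀ *ᵥ (fun u => if u ∈ S then 1 else 0) = 0 := by
    ext u
    have hpred : ∑ p ∈ S, (if f p = some u then (1 : R) else 0) =
        ∑ p ∈ S, if p = u then 1 else 0 :=
      calc _ = ∑ p ∈ S, (if succ p = u then (1 : R) else 0) :=
            sum_congr rfl fun p hp => by simp only [(hsucc p hp).1, Option.some.injEq]
        _ = _ := sum_nbij succ hmaps hinj hsurj fun _ _ => rfl
    simp only [mulVec_transpose, vecMul, dotProduct, ite_mul, one_mul, zero_mul, sum_ite_mem,
      univ_inter, forestMatrix, of_apply, sum_sub_distrib, hpred, sub_self, Pi.zero_apply]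
  rw [← det_transpose]
  exact det_eq_zero_of_mulVec_eq_zero_of_mem_nonZeroDivisors hrows (i := v)
    (by simp [S, hv, one_mem])

theorem det_forestMatrix_of_acyclic {f : V → Option V}
    (hf : ∀ v, ¬ TransGen (fun a b => f a = some b) v v) : (forestMatrix (R := R) f).det = 1 := by
  set height : V → ℕ := fun v => #(univ.filter (ReflTransGen (fun a b => f a = some b) v))
  have hlt : ∀ v u, f v = some u → height u < height v := by
    intro v u hvu
    refine card_lt_card ⟨fun x hx => ?_, fun hsub => ?_⟩
    · simpa using ReflTransGen.head (r := fun a b => f a = some b) hvu (mem_filter.mp hx).2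
    · have hv : v ∈ univ.filter (ReflTransGen (fun a b => f a = some b) v) :=
        mem_filter.mpr ⟨mem_univ v, .refl⟩
      exact hf v (TransGen.head' hvu (mem_filter.mp (hsub hv)).2)
  have hM : (forestMatrix (R := R) f).BlockTriangular (OrderDual.toDual ∘ height) := by
    intro v u (huv : height v < height u)
    rw [forestMatrix_apply_of_ne_some fun h => (hlt v u h).not_gt huv, if_neg]
    rintro rfl
    exact huv.false
  have hblock : ∀ k,
      (forestMatrix (R := R) f).toSquareBlock (OrderDual.toDual ∘ height) k = 1 := by
    intro k
    ext ⟨v, hv⟩ ⟨u, hu⟩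
    have huv : height u = height v := OrderDual.toDual.injective (hu.trans hv.symm)
    rw [toSquareBlock_def, of_apply, forestMatrix_apply_of_ne_some fun h => (hlt v u h).ne huv,
      one_apply]
    simp only [Subtype.mk.injEq]
  rw [hM.det]
  exact prod_eq_one fun k _ => by rw [hblock, det_one]

end ForestMatrix

section Laplacian

variable {V R : Type*} [Fintype V] [DecidableEq V] [CommRing R]

def digraphLaplacian (w : V → V → R) : Matrix V V R :=
  of fun i j => if i = j then ∑ k, w i k else -w i j

theorem digraphLaplacian_add_smul_one {w : V → V → R} (hw : ∀ v, w v v = 0) (t : R) :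
    digraphLaplacian w + t • 1 = of fun v => ∑ c : Option V,
      c.elim t (w v) • fun u => (if v = u then 1 else 0) - if c = some u then 1 else 0 := by
  ext v u
  simp only [digraphLaplacian, Matrix.add_apply, of_apply, Matrix.smul_apply, Matrix.one_apply,
    smul_eq_mul, mul_ite, mul_one, mul_zero, Fintype.sum_option, Option.elim_none, reduceCtorEq,
    ↓reduceIte, sub_zero, Option.elim_some, Option.some.injEq, Pi.add_apply, Pi.smul_apply,
    Finset.sum_apply, mul_sub, sum_sub_distrib, sum_ite_irrel, sum_const_zero, sum_ite_eq', mem_univ]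
  split_ifs with h
  · subst h
    rw [hw, sub_zero, add_comm]
  · ring

theorem forestEnum_ne_eq_det_digraphLaplacian_add_smul_one {w : V → V → R}
    (hw : ∀ v, w v v = 0) (t : R) :
    forestEnum (· ≠ ·) w t = (digraphLaplacian w + t • 1).det := by
  rw [digraphLaplacian_add_smul_one hw, det_of_sum_smul_rows, forestEnum, sum_filter]
  -- `forestEnum` enumerates `V → Option V` using classical decidable equality on `V`
  refine sum_congr (by congr!) fun f _ => ?_
  change _ = _ * (forestMatrix f).det
  by_cases hf : ∀ v, ¬ TransGen (fun a b => f a = some b) v v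
  · rw [if_pos ((isRootedForest_ne_iff f).mpr hf), det_forestMatrix_of_acyclic hf, mul_one]
  · obtain ⟨v, hv⟩ := not_forall_not.mp hf
    rw [if_neg fun h => (isRootedForest_ne_iff f).mp h v hv,
      det_forestMatrix_of_transGen_self hv, mul_zero]

end Laplacian

/-- Directed, weighted, forest version of the matrix-tree theorem: for a weighted
digraph on `[n]` with arc weights `w i j` (and no loops), the rooted-forest
enumerator equals `det(L + t·I)` where `L` is the Laplacian with off-diagonal
entries `-w i j` and diagonal entries `∑ₖ w i k`. -/
theorem matrix_tree_forest_theorem {R : Type*} [CommRing R]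
    (n : ℕ) (w : Fin n → Fin n → R) (hw : ∀ i : Fin n, w i i = 0) (t : R) :
    forestEnum (fun i j : Fin n => i ≠ j) w t =
      (Matrix.of (fun i j : Fin n => if i = j then ∑ k : Fin n, w i k else - w i j)
        + t • (1 : Matrix (Fin n) (Fin n) R)).det :=
  forestEnum_ne_eq_det_digraphLaplacian_add_smul_one hw t
end

section
/- Let u, v ∈ {0,1}^n be two vertices of the hypercube C_n, and let T_{C_n,w}(x) denote the weighted enumerator of spanning trees rooted at w (arcs directed toward w, weight x_{i,ε} per arc of direction i and spin ε). Then T_{C_n,u}(x) · ∏_{i=1}^n x_{i,v_i} = T_{C_n,v}(x) · ∏_{i=1}^n x_{i,u_i}. -/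
open scoped Classical
open Polynomial

open scoped Classical in
/-- Enumerator of spanning trees of the hypercube `C_n` rooted at `w`: sum over
rooted spanning forests with unique root `w` (i.e. spanning trees oriented toward
`w`) of the product of the weights `x i ε` of their arcs. -/
noncomputable def cubeTreeEnum {R : Type*} [CommRing R] (n : ℕ)
    (x : Fin n → Bool → R) (w : Fin n → Bool) : R :=
  ∑ f ∈ Finset.univ.filter
      (fun f : (Fin n → Bool) → Option (Fin n → Bool) =>
        IsRootedForest (cubeArc n) f ∧ f w = none ∧ ∀ u, u ≠ w → f u ≠ none),
    ∏ u : Fin n → Bool, (f u).elim 1 (cubeWeight n x u)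

/-!
Re-rooting a spanning tree from `u` at `v` reverses exactly the arcs of the path from `v` to `u`
and is a bijection between trees rooted at `u` and trees rooted at `v`. The hypercube weights
satisfy detailed balance, `w(a,b) P(a) = w(b,a) P(b)` with potential `P(a) = ∏ᵢ x_{i,aᵢ}`, so
reversing the path multiplies the weight of a tree by `P(v) / P(u)`.
-/

open Relation Finset Function

section Reversible

variable {V R : Type*} [CommRing R]

def IsReversible (A : V → V → Prop) (w : V → V → R) (P : V → R) : Prop :=
  ∀ a b, A a b → w a b * P a = w b a * P b

lemma IsReversible.mono {A B : V → V → Prop} {w : V → V → R} {P : V → R}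
    (h : IsReversible B w P) (hAB : A ≤ B) : IsReversible A w P :=
  fun a b hab => h a b (hAB a b hab)

end Reversible

namespace ParentMap

variable {V : Type*} {f : V → Option V} {r u v a b c : V}

def Arc (f : V → Option V) (a b : V) : Prop := f a = some b

abbrev Reaches (f : V → Option V) : V → V → Prop := ReflTransGen (Arc f)

def IsAcyclic (f : V → Option V) : Prop := ∀ a, ¬ TransGen (Arc f) a a

structure IsTree (f : V → Option V) (r : V) : Prop where
  acyclic : IsAcyclic f
  root : f r = none
  ne_none : ∀ a, a ≠ r → f a ≠ none

lemma arc_rightUnique : Relator.RightUnique (Arc f) :=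
  fun _ _ _ h₁ h₂ => Option.some.inj (h₁.symm.trans h₂)

lemma not_arc_of_eq_none (h : f a = none) : ¬ Arc f a b := by
  simp [Arc, h]

lemma ne_none_of_reaches (h : Reaches f a r) (har : a ≠ r) : f a ≠ none := by
  obtain ⟨b, hab, -⟩ := (h.cases_head.resolve_left har)
  exact fun ha => not_arc_of_eq_none ha hab

lemma transGen_self_of_reaches (hcyc : TransGen (Arc f) a a) (h : Reaches f a b) :
    TransGen (Arc f) b b := by
  induction h with
  | refl => exact hcyc
  | tail _ hcd ih =>
    obtain ⟨e, hce, hec⟩ := TransGen.head'_iff.mp ih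
    cases arc_rightUnique hce hcd
    exact TransGen.tail' hec hcd

lemma IsTree.of_forall_reaches (hr : f r = none) (h : ∀ a, Reaches f a r) : IsTree f r where
  acyclic a hcyc := by
    obtain ⟨_, hr', -⟩ := TransGen.head'_iff.mp (transGen_self_of_reaches hcyc (h a))
    exact not_arc_of_eq_none hr hr'
  root := hr
  ne_none a har := ne_none_of_reaches (h a) har

lemma IsAcyclic.wellFounded [Finite V] (hf : IsAcyclic f) :
    WellFounded (flip (TransGen (Arc f))) :=
  haveI : Std.Irrefl (flip (TransGen (Arc f))) := ⟨hf⟩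
  haveI : IsTrans V (flip (TransGen (Arc f))) := ⟨fun _ _ _ h₁ h₂ => h₂.trans h₁⟩
  Finite.wellFounded_of_trans_of_irrefl _

lemma IsTree.reaches_root [Finite V] (hT : IsTree f r) (a : V) : Reaches f a r := by
  induction a using hT.acyclic.wellFounded.induction with
  | _ a ih =>
    by_cases har : a = r
    · exact har ▸ .refl
    · obtain ⟨b, hab⟩ := Option.ne_none_iff_exists'.mp (hT.ne_none a har)
      exact .head hab (ih b (.single hab))

lemma IsAcyclic.ne_of_reaches_of_arc (hf : IsAcyclic f) (hb : Reaches f v b) (hba : Arc f b a) :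
    a ≠ v := by
  rintro rfl
  exact hf a (TransGen.tail' hb hba)

lemma IsAcyclic.eq_of_reaches_of_arc {b' : V} (hf : IsAcyclic f) (hb : Reaches f v b)
    (hb' : Reaches f v b') (hba : Arc f b a) (hb'a : Arc f b' a) : b = b' := by
  wlog hbb' : Reaches f b b' generalizing b b'
  · exact (this hb' hb hb'a hba
      ((hb.total_of_right_unique arc_rightUnique hb').resolve_left hbb')).symm
  rcases hbb'.cases_head with rfl | ⟨c, hbc, hcb'⟩
  · rfl
  · cases arc_rightUnique hba hbc
    exact absurd (TransGen.tail' hcb' hb'a) (hf a)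

/-- The tree re-rooted at `v`: the arcs of the path from `v` are reversed, the others kept. -/
noncomputable def reroot (f : V → Option V) (v a : V) : Option V :=
  if a = v then none else if h : ∃ b, Reaches f v b ∧ Arc f b a then some h.choose else f a

lemma reroot_self : reroot f v v = none := if_pos rfl

lemma reroot_of_not_reaches (ha : ¬ Reaches f v a) : reroot f v a = f a := by
  have hav : a ≠ v := by rintro rfl; exact ha .refl
  rw [reroot, if_neg hav, dif_neg fun ⟨b, hb, hba⟩ => ha (hb.tail hba)]

lemma IsAcyclic.reroot_of_arc (hf : IsAcyclic f) (hb : Reaches f v b) (hba : Arc f b a) :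
    reroot f v a = some b := by
  have h : ∃ b, Reaches f v b ∧ Arc f b a := ⟨b, hb, hba⟩
  rw [reroot, if_neg (hf.ne_of_reaches_of_arc hb hba), dif_pos h,
    hf.eq_of_reaches_of_arc h.choose_spec.1 hb h.choose_spec.2 hba]

lemma arc_reroot (h : Arc (reroot f v) a b) :
    (Reaches f v b ∧ Arc f b a) ∨ (¬ Reaches f v a ∧ Arc f a b) := by
  unfold Arc reroot at h
  split_ifs at h with hav hpred
  · exact Option.some.inj h ▸ Or.inl hpred.choose_spec
  · refine Or.inr ⟨fun ha => ?_, h⟩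
    obtain ⟨b, hb, hba⟩ := ha.cases_tail.resolve_left hav
    exact hpred ⟨b, hb, hba⟩

lemma arc_reroot_le {A : V → V → Prop} [Std.Symm A] (hf : Arc f ≤ A) :
    Arc (reroot f v) ≤ A :=
  fun a b h => (arc_reroot h).elim (fun h => Std.Symm.symm b a (hf b a h.2)) (hf a b ·.2)

lemma IsAcyclic.reaches_reroot (hf : IsAcyclic f) (ha : Reaches f v a) :
    Reaches (reroot f v) a v := by
  induction ha with
  | refl => exact .refl
  | tail hb hbc ih => exact .head (hf.reroot_of_arc hb hbc) ih

section Tree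

variable [Finite V]

lemma IsTree.reaches_reroot (hT : IsTree f u) (v a : V) : Reaches (reroot f v) a v := by
  induction hT.reaches_root a using ReflTransGen.head_induction_on with
  | refl => exact hT.acyclic.reaches_reroot (hT.reaches_root v)
  | @head a b hab _ ih =>
    by_cases ha : Reaches f v a
    · exact hT.acyclic.reaches_reroot ha
    · exact .head ((reroot_of_not_reaches ha).trans hab) ih

lemma isTree_reroot (hT : IsTree f u) (v : V) : IsTree (reroot f v) v :=
  .of_forall_reaches reroot_self (hT.reaches_reroot v)

lemma IsTree.reaches_reroot_iff (hT : IsTree f u) :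
    Reaches (reroot f v) u a ↔ Reaches f v a := by
  constructor
  · intro h
    induction h with
    | refl => exact hT.reaches_root v
    | tail _ hbc ih =>
      rcases arc_reroot hbc with ⟨hc, -⟩ | ⟨hb, -⟩
      exacts [hc, absurd ih hb]
  · intro ha
    induction hT.reaches_root a using ReflTransGen.head_induction_on with
    | refl => exact .refl
    | @head a c hac _ ih => exact (ih (ha.tail hac)).tail (hT.acyclic.reroot_of_arc ha hac)

lemma IsTree.reroot_reroot (hT : IsTree f u) : reroot (reroot f v) u = f := by
  funext a
  by_cases hau : a = u
  · rw [hau, reroot_self, hT.root]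
  by_cases ha : Reaches f v a
  · obtain ⟨c, hac⟩ := Option.ne_none_iff_exists'.mp (hT.ne_none a hau)
    rw [(isTree_reroot hT v).acyclic.reroot_of_arc (hT.reaches_reroot_iff.mpr (ha.tail hac))
      (hT.acyclic.reroot_of_arc ha hac), hac]
  · rw [reroot_of_not_reaches (mt hT.reaches_reroot_iff.mp ha), reroot_of_not_reaches ha]

end Tree

section Weight

variable [Fintype V] {R : Type*} [CommRing R] {w : V → V → R} {P : V → R}

noncomputable def pathFinset (f : V → Option V) (a : V) : Finset V := {c | Reaches f a c}

lemma mem_pathFinset : c ∈ pathFinset f a ↔ Reaches f a c := by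
  simp [pathFinset]

lemma pathFinset_of_eq_none (h : f a = none) : pathFinset f a = {a} := by
  ext c
  rw [mem_pathFinset, mem_singleton]
  refine ⟨fun hac => ?_, fun hc => hc ▸ .refl⟩
  rcases hac.cases_head with rfl | ⟨b, hab, -⟩
  exacts [rfl, absurd hab (not_arc_of_eq_none h)]

lemma IsAcyclic.notMem_pathFinset (hf : IsAcyclic f) (hab : Arc f a b) :
    a ∉ pathFinset f b :=
  fun hba => hf a (TransGen.head' hab (mem_pathFinset.mp hba))

lemma pathFinset_of_arc (hab : Arc f a b) : pathFinset f a = insert a (pathFinset f b) := by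
  ext c
  rw [mem_insert, mem_pathFinset, mem_pathFinset]
  refine ⟨fun hac => ?_, ?_⟩
  · rcases hac.cases_head with rfl | ⟨b', hab', hb'c⟩
    exacts [.inl rfl, .inr (arc_rightUnique hab hab' ▸ hb'c)]
  · rintro (rfl | hbc)
    exacts [.refl, .head hab hbc]

/-- Induction along the path from `a` to the root; each reversed arc is paid for by detailed
balance. -/
lemma IsAcyclic.prod_reroot_pathFinset (hf : IsAcyclic f) (hu : f u = none)
    (hw : IsReversible (Arc f) w P) (hva : Reaches f v a) (hau : Reaches f a u) :
    (∏ c ∈ pathFinset f a, (reroot f v c).elim 1 (w c)) * P u =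
      (reroot f v a).elim 1 (w a) * (∏ c ∈ pathFinset f a, (f c).elim 1 (w c)) * P a := by
  induction hau using ReflTransGen.head_induction_on with
  | refl => simp [pathFinset_of_eq_none hu, hu]
  | @head a b hab _ ih =>
    have hba : reroot f v b = some a := hf.reroot_of_arc hva hab
    rw [pathFinset_of_arc hab, prod_insert (hf.notMem_pathFinset hab),
      prod_insert (hf.notMem_pathFinset hab), hab, mul_assoc, ih (hva.tail hab), hba]
    simp only [Option.elim_some]
    linear_combination (reroot f v a).elim 1 (w a) *
      (∏ c ∈ pathFinset f b, (f c).elim 1 (w c)) * (hw a b hab).symm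

lemma IsTree.prod_reroot_mul (hT : IsTree f u) (hw : IsReversible (Arc f) w P) (v : V) :
    (∏ a, (reroot f v a).elim 1 (w a)) * P u = (∏ a, (f a).elim 1 (w a)) * P v := by
  have hpath := hT.acyclic.prod_reroot_pathFinset hT.root hw .refl (hT.reaches_root v)
  simp only [reroot_self, Option.elim_none, one_mul] at hpath
  have hoff : ∏ a ∈ (pathFinset f v)ᶜ, (reroot f v a).elim 1 (w a) =
      ∏ a ∈ (pathFinset f v)ᶜ, (f a).elim 1 (w a) :=
    prod_congr rfl fun a ha => by
      rw [reroot_of_not_reaches (mem_pathFinset.not.mp (mem_compl.mp ha))]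
  rw [← prod_mul_prod_compl (pathFinset f v), ← prod_mul_prod_compl (pathFinset f v), hoff]
  linear_combination (∏ a ∈ (pathFinset f v)ᶜ, (f a).elim 1 (w a)) * hpath

end Weight

end ParentMap

open ParentMap

section Enumerator

variable {V : Type*} [Fintype V] [DecidableEq V] {R : Type*} [CommRing R]

noncomputable def treeEnum (A : V → V → Prop) (w : V → V → R) (r : V) : R :=
  ∑ f : V → Option V with Arc f ≤ A ∧ IsTree f r, ∏ a, (f a).elim 1 (w a)

theorem treeEnum_mul_eq_of_isReversible {A : V → V → Prop} [Std.Symm A] {w : V → V → R}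
    {P : V → R} (hw : IsReversible A w P) (u v : V) :
    treeEnum A w u * P v = treeEnum A w v * P u := by
  simp only [treeEnum, sum_mul]
  refine sum_nbij' (reroot · v) (reroot · u) ?_ ?_ ?_ ?_ ?_ <;> simp only [mem_filter_univ]
  · exact fun f ⟨hfA, hT⟩ => ⟨arc_reroot_le hfA, isTree_reroot hT v⟩
  · exact fun f ⟨hfA, hT⟩ => ⟨arc_reroot_le hfA, isTree_reroot hT u⟩
  · exact fun f ⟨_, hT⟩ => hT.reroot_reroot
  · exact fun f ⟨_, hT⟩ => hT.reroot_reroot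
  · exact fun f ⟨hfA, hT⟩ => (hT.prod_reroot_mul (hw.mono hfA) v).symm

end Enumerator

section Hypercube

variable {R : Type*} [CommRing R] {n : ℕ}

lemma mul_prod_apply_update {ι : Type*} [Fintype ι] [DecidableEq ι] {β : ι → Type*}
    {M : Type*} [CommMonoid M] (x : ∀ i, β i → M) (a : ∀ i, β i) (i : ι) (c : β i) :
    x i (a i) * ∏ j, x j (update a i c j) = x i c * ∏ j, x j (a j) := by
  have h : ∏ j, x j (a j) = ∏ j, update (fun k => x k (a k)) i (x i (a i)) j := by
    rw [update_eq_self]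
  simp only [apply_update x a i c, h, prod_update_of_mem (mem_univ i)]
  exact mul_left_comm _ _ _

instance (n : ℕ) : Std.Symm (cubeArc n) where
  symm := by
    rintro a _ ⟨i, rfl⟩
    exact ⟨i, by simp⟩

lemma cubeWeight_of_eq_update (x : Fin n → Bool → R) {a b : Fin n → Bool} {i : Fin n}
    (h : b = update a i (!a i)) : cubeWeight n x a b = x i (b i) := by
  subst h
  refine (sum_eq_single i (fun j _ hji => if_neg fun hj => ?_) (by simp)).trans (if_pos rfl)
  simpa [hji] using congrFun hj j

lemma cubeWeight_isReversible (x : Fin n → Bool → R) :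
    IsReversible (cubeArc n) (cubeWeight n x) (fun a => ∏ i, x i (a i)) := by
  rintro a b ⟨i, hb⟩
  have ha : a = update b i (!b i) := by simp [hb]
  rw [cubeWeight_of_eq_update x hb, cubeWeight_of_eq_update x ha, hb, update_self]
  linear_combination (mul_prod_apply_update x a i (!a i)).symm

lemma cubeTreeEnum_eq_treeEnum (x : Fin n → Bool → R) (r : Fin n → Bool) :
    cubeTreeEnum n x r = treeEnum (cubeArc n) (cubeWeight n x) r :=
  sum_congr (filter_congr fun _ _ =>
    ⟨fun ⟨⟨hA, hacyc⟩, hr, hs⟩ => ⟨hA, hacyc, hr, hs⟩,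
      fun ⟨hA, hacyc, hr, hs⟩ => ⟨⟨hA, hacyc⟩, hr, hs⟩⟩) fun _ _ => rfl

end Hypercube

/-- Re-rooting relation for spanning-tree enumerators of the hypercube:
`T_{C_n,u}(x) · ∏ᵢ x_{i,v_i} = T_{C_n,v}(x) · ∏ᵢ x_{i,u_i}`. -/
theorem hypercube_tree_enumerator_reroot {R : Type*} [CommRing R]
    (n : ℕ) (x : Fin n → Bool → R) (u v : Fin n → Bool) :
    cubeTreeEnum n x u * ∏ i : Fin n, x i (v i) =
      cubeTreeEnum n x v * ∏ i : Fin n, x i (u i) := by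
  rw [cubeTreeEnum_eq_treeEnum, cubeTreeEnum_eq_treeEnum]
  exact treeEnum_mul_eq_of_isReversible (cubeWeight_isReversible x) u v
end
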